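/- arXiv:1701.00052 — 11 statements merged into one kernel-verified Lean document; each statement's English description precedes it below -/
import Mathlib

section
/- For every integer n ≥ 32, the threshold b_n satisfies (n-1)/√e + 1 < b_n < (n - 3/2)/√e + 5/2. -/
open Finset

/-- The threshold `b_n = min{ j : 2 ≤ j ≤ n, ∑_{i=j+1}^n 1/(i-2) ≤ 1/2 }` (empty sum = 0). -/
noncomputable def bThresh (n : ℕ) : ℕ :=
  sInf {j : ℕ | 2 ≤ j ∧ j ≤ n ∧ ∑ i ∈ Finset.Icc (j + 1) n, (1 : ℝ) / ((i : ℝ) - 2) ≤ 1 / 2}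

/-- `u_n = (b_n - 2)(2n - 4) ∑_{i=b_n}^n 1/(i-2)`. -/
noncomputable def uVal (n : ℕ) : ℝ :=
  ((bThresh n : ℝ) - 2) * (2 * (n : ℝ) - 4) *
    ∑ i ∈ Finset.Icc (bThresh n) n, (1 : ℝ) / ((i : ℝ) - 2)

/-- `f_n(x) = 3x² - (1+4n)x + (n-2)b_n + 2(n+1) + u_n`. -/
noncomputable def fPoly (n : ℕ) (x : ℝ) : ℝ :=
  3 * x ^ 2 - (1 + 4 * (n : ℝ)) * x + ((n : ℝ) - 2) * (bThresh n : ℝ) + 2 * ((n : ℝ) + 1) + uVal n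

/-- The threshold `a_n = min{ j : 2 ≤ j ≤ n, f_n(j) ≤ 0 }`. -/
noncomputable def aThresh (n : ℕ) : ℕ :=
  sInf {j : ℕ | 2 ≤ j ∧ j ≤ n ∧ fPoly n (j : ℝ) ≤ 0}

/-
Compare `H(j) = ∑_{i=j+1}^n 1/(i-2)` with logarithms by telescoping. Termwise,
`log(t+1) - log t < 1/t < log(t+1/2) - log(t-1/2)` for `t ≥ 1` (the second inequality from the
Padé bound `eˣ(2-x) ≤ 2+x`), so `log((n-1)/(j-1)) < H(j) ≤ log((n-3/2)/(j-3/2))`.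
At `j = b_n` the left inequality and `H(b_n) ≤ 1/2` give `b_n - 1 > (n-1)/√e`; at
`j = ⌈(n-3/2)/√e + 3/2⌉` the right one gives `H(j) ≤ 1/2`, hence `b_n ≤ j`.
-/

namespace Real

theorem exp_mul_two_sub_le_two_add {x : ℝ} (h0 : 0 ≤ x) (h1 : x ≤ 1) :
    exp x * (2 - x) ≤ 2 + x := by
  have htaylor : exp x ≤ 1 + x + x ^ 2 / 2 + x ^ 3 / 6 + 5 * x ^ 4 / 96 := by
    convert exp_bound' h0 h1 (n := 4) (by norm_num) using 1
    simp [Finset.sum_range_succ, Nat.factorial]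
    ring
  nlinarith [pow_nonneg h0 3, pow_nonneg h0 4, pow_nonneg h0 5, exp_pos x]

theorem log_add_one_sub_log_lt {t : ℝ} (ht : 0 < t) : log (t + 1) - log t < 1 / t := by
  have h := log_lt_sub_one_of_pos (x := (t + 1) / t) (by positivity)
    (by rw [ne_eq, div_eq_one_iff_eq ht.ne']; linarith)
  rw [log_div (by linarith) ht.ne'] at h
  calc log (t + 1) - log t < (t + 1) / t - 1 := h
    _ = 1 / t := by field_simp; ring

theorem one_div_le_log_add_half_sub_log_sub_half {t : ℝ} (ht : 1 ≤ t) :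
    1 / t ≤ log (t + 1 / 2) - log (t - 1 / 2) := by
  have ht0 : 0 < t := by linarith
  have hpade := exp_mul_two_sub_le_two_add (x := 1 / t) (by positivity)
    (by rw [div_le_one ht0]; exact ht)
  have hexp : exp (1 / t) ≤ (t + 1 / 2) / (t - 1 / 2) := by
    rw [le_div_iff₀ (by linarith)]
    calc exp (1 / t) * (t - 1 / 2) = exp (1 / t) * (2 - 1 / t) * (t / 2) := by field_simp
      _ ≤ (2 + 1 / t) * (t / 2) := by gcongr
      _ = t + 1 / 2 := by field_simp
  rw [← log_div (by linarith) (by linarith), le_log_iff_exp_le (by linarith [exp_pos (1 / t)])]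
  exact hexp

theorem log_sub_log_lt_iff {x y a : ℝ} (hx : 0 < x) (hy : 0 < y) :
    log x - log y < a ↔ x < y * exp a := by
  rw [← log_div hx.ne' hy.ne', log_lt_iff_lt_exp (div_pos hx hy), div_lt_iff₀' hy]

theorem log_sub_log_le_iff {x y a : ℝ} (hx : 0 < x) (hy : 0 < y) :
    log x - log y ≤ a ↔ x ≤ y * exp a := by
  rw [← log_div hx.ne' hy.ne', log_le_iff_le_exp (div_pos hx hy), div_le_iff₀' hy]

theorem one_lt_sqrt_exp_one : 1 < √(exp 1) := by
  rw [← exp_half]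
  exact one_lt_exp_iff.mpr (by norm_num)

end Real

open Real

section TailSum

variable {c : ℝ} {j n : ℕ}

theorem log_sub_log_lt_sum_Icc_one_div_sub (hc : c < j + 1) (hjn : j < n) :
    log (n + 1 - c) - log (j + 1 - c) < ∑ i ∈ Icc (j + 1) n, 1 / ((i : ℝ) - c) := by
  have htel := Finset.sum_Icc_sub (M := ℝ) (by omega : j + 1 ≤ n) fun i => log ((i : ℝ) - c)
  push_cast at htel
  rw [← htel]
  refine sum_lt_sum_of_nonempty (nonempty_Icc.mpr (by omega)) fun i hi => ?_
  have hi : (j : ℝ) + 1 ≤ i := by exact_mod_cast (mem_Icc.mp hi).1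
  rw [add_sub_right_comm]
  exact log_add_one_sub_log_lt (by linarith)

theorem sum_Icc_one_div_sub_le_log_sub_log (hc : c ≤ j) (hjn : j ≤ n) :
    ∑ i ∈ Icc (j + 1) n, 1 / ((i : ℝ) - c) ≤ log (n + 1 / 2 - c) - log (j + 1 / 2 - c) := by
  have htel :=
    Finset.sum_Ico_sub (fun i => log ((i : ℝ) - c - 1 / 2)) (by omega : j + 1 ≤ n + 1)
  rw [Finset.Ico_add_one_right_eq_Icc] at htel
  push_cast at htel
  calc ∑ i ∈ Icc (j + 1) n, 1 / ((i : ℝ) - c)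
      ≤ ∑ i ∈ Icc (j + 1) n,
          (log ((i : ℝ) + 1 - c - 1 / 2) - log ((i : ℝ) - c - 1 / 2)) := by
        refine sum_le_sum fun i hi => ?_
        have hi : (j : ℝ) + 1 ≤ i := by exact_mod_cast (mem_Icc.mp hi).1
        rw [show (i : ℝ) + 1 - c - 1 / 2 = i - c + 1 / 2 by ring]
        exact one_div_le_log_add_half_sub_log_sub_half (by linarith)
    _ = log (n + 1 / 2 - c) - log (j + 1 / 2 - c) := by rw [htel]; ring_nf

end TailSum

section Threshold

variable {n : ℕ}

theorem bThresh_spec (hn : 2 ≤ n) :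
    2 ≤ bThresh n ∧ bThresh n ≤ n ∧
      ∑ i ∈ Icc (bThresh n + 1) n, (1 : ℝ) / ((i : ℝ) - 2) ≤ 1 / 2 :=
  Nat.sInf_mem (s := {j : ℕ | 2 ≤ j ∧ j ≤ n ∧
      ∑ i ∈ Icc (j + 1) n, (1 : ℝ) / ((i : ℝ) - 2) ≤ 1 / 2}) ⟨n, hn, le_rfl, by simp⟩

theorem bThresh_le {j : ℕ} (hj : 2 ≤ j) (hjn : j ≤ n)
    (hsum : ∑ i ∈ Icc (j + 1) n, (1 : ℝ) / ((i : ℝ) - 2) ≤ 1 / 2) : bThresh n ≤ j :=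
  Nat.sInf_le ⟨hj, hjn, hsum⟩

theorem sub_one_div_sqrt_exp_add_one_lt_bThresh (hn : 2 ≤ n) :
    ((n : ℝ) - 1) / √(exp 1) + 1 < bThresh n := by
  obtain ⟨hb2, hbn, hsum⟩ := bThresh_spec hn
  have hs := one_lt_sqrt_exp_one
  have hb : (2 : ℝ) ≤ bThresh n := by exact_mod_cast hb2
  have hn' : (2 : ℝ) ≤ n := by exact_mod_cast hn
  suffices (n : ℝ) - 1 < ((bThresh n : ℝ) - 1) * √(exp 1) by
    linarith [(div_lt_iff₀ (by linarith : (0 : ℝ) < √(exp 1))).mpr this]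
  rcases hbn.eq_or_lt with hbn | hbn
  · rw [hbn]
    nlinarith
  · have hlog := (log_sub_log_lt_sum_Icc_one_div_sub (c := 2) (by linarith) hbn).trans_le hsum
    rw [log_sub_log_lt_iff (by linarith) (by linarith), exp_half] at hlog
    linarith

theorem bThresh_lt_sub_three_halves_div_sqrt_exp_add_five_halves (hn : 2 ≤ n) :
    (bThresh n : ℝ) < ((n : ℝ) - 3 / 2) / √(exp 1) + 5 / 2 := by
  have hs := one_lt_sqrt_exp_one
  have hn' : (2 : ℝ) ≤ n := by exact_mod_cast hn
  set x := ((n : ℝ) - 3 / 2) / √(exp 1) + 3 / 2 with hx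
  have hx0 : 0 < ((n : ℝ) - 3 / 2) / √(exp 1) := div_pos (by linarith) (by linarith)
  have hxn : ((n : ℝ) - 3 / 2) / √(exp 1) ≤ n - 3 / 2 := div_le_self (by linarith) hs.le
  have hxm : x ≤ ⌈x⌉₊ := Nat.le_ceil x
  have hmx : (⌈x⌉₊ : ℝ) < x + 1 := Nat.ceil_lt_add_one (by linarith)
  have hm2 : 2 ≤ ⌈x⌉₊ := by
    have : (1 : ℝ) < ⌈x⌉₊ := by linarith
    exact_mod_cast this
  have hmn : ⌈x⌉₊ ≤ n := Nat.ceil_le.mpr (by linarith)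
  have hsum : ∑ i ∈ Icc (⌈x⌉₊ + 1) n, (1 : ℝ) / ((i : ℝ) - 2) ≤ 1 / 2 := by
    refine (sum_Icc_one_div_sub_le_log_sub_log (by exact_mod_cast hm2) hmn).trans ?_
    rw [log_sub_log_le_iff (by linarith) (by linarith), exp_half]
    have := (div_le_iff₀ (by linarith : (0 : ℝ) < √(exp 1))).mp
      (by linarith : ((n : ℝ) - 3 / 2) / √(exp 1) ≤ ⌈x⌉₊ - 3 / 2)
    linarith
  calc (bThresh n : ℝ) ≤ ⌈x⌉₊ := by exact_mod_cast bThresh_le hm2 hmn hsum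
    _ < x + 1 := hmx
    _ = ((n : ℝ) - 3 / 2) / √(exp 1) + 5 / 2 := by ring

end Threshold

theorem bThresh_bounds_sqrt_e (n : ℕ) (hn : 32 ≤ n) :
    ((n : ℝ) - 1) / Real.sqrt (Real.exp 1) + 1 < (bThresh n : ℝ) ∧
      (bThresh n : ℝ) < ((n : ℝ) - 3 / 2) / Real.sqrt (Real.exp 1) + 5 / 2 :=
  ⟨sub_one_div_sqrt_exp_add_one_lt_bThresh (by omega),
    bThresh_lt_sub_three_halves_div_sqrt_exp_add_five_halves (by omega)⟩
end

section
/- For every integer n ≥ 32, with b_n as defined and u_n = (b_n - 2)(2n - 4) ∑_{i=b_n}^{n} 1/(i-2), one has (b_n - 2)(n - 2) < u_n ≤ b_n (n - 2). -/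
open Finset

theorem uVal_bounds (n : ℕ) (hn : 32 ≤ n) :
    ((bThresh n : ℝ) - 2) * ((n : ℝ) - 2) < uVal n ∧ uVal n ≤ (bThresh n : ℝ) * ((n : ℝ) - 2) := by
  have hne : {j : ℕ | 2 ≤ j ∧ j ≤ n ∧
      ∑ i ∈ Finset.Icc (j + 1) n, (1 : ℝ) / ((i : ℝ) - 2) ≤ 1 / 2}.Nonempty := by
    refine ⟨n, by omega, le_refl n, ?_⟩
    rw [Finset.Icc_eq_empty (by omega)]
    norm_num
  have hbs : bThresh n = sInf {j : ℕ | 2 ≤ j ∧ j ≤ n ∧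
      ∑ i ∈ Finset.Icc (j + 1) n, (1 : ℝ) / ((i : ℝ) - 2) ≤ 1 / 2} := rfl
  have hmem := Nat.sInf_mem hne
  rw [← hbs] at hmem
  obtain ⟨hb2, hbn, hT⟩ := hmem
  have hb3 : 3 ≤ bThresh n := by
    by_contra h
    have hb2' : bThresh n = 2 := by omega
    rw [hb2'] at hT
    have h3 : (3 : ℕ) ∈ Finset.Icc 3 n := by
      simp only [Finset.mem_Icc]; omega
    have hT' : ∑ i ∈ Finset.Icc 3 n, (1 : ℝ) / ((i : ℝ) - 2) ≤ 1 / 2 := hT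
    have hle := Finset.single_le_sum (f := fun i : ℕ => (1 : ℝ) / ((i : ℝ) - 2))
      (fun i hi => div_nonneg (by norm_num) (by
        have h1 : 3 ≤ i := (Finset.mem_Icc.mp hi).1
        have h2 : (3 : ℝ) ≤ (i : ℝ) := by exact_mod_cast h1
        linarith)) h3
    norm_num at hle
    simp only [one_div] at hT'
    linarith
  have hnotmem : (bThresh n - 1) ∉ {j : ℕ | 2 ≤ j ∧ j ≤ n ∧
      ∑ i ∈ Finset.Icc (j + 1) n, (1 : ℝ) / ((i : ℝ) - 2) ≤ 1 / 2} := by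
    rw [hbs] at hb3 ⊢
    apply Nat.notMem_of_lt_sInf
    omega
  have hS : 1 / 2 < ∑ i ∈ Finset.Icc (bThresh n) n, (1 : ℝ) / ((i : ℝ) - 2) := by
    by_contra h
    push_neg at h
    exact hnotmem ⟨by omega, by omega, by
      have he : bThresh n - 1 + 1 = bThresh n := by omega
      rw [he]; exact h⟩
  have hsplit : ∑ i ∈ Finset.Icc (bThresh n) n, (1 : ℝ) / ((i : ℝ) - 2)
      = 1 / ((bThresh n : ℝ) - 2) +
        ∑ i ∈ Finset.Icc (bThresh n + 1) n, (1 : ℝ) / ((i : ℝ) - 2) := by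
    rw [Finset.Icc_eq_cons_Ioc hbn, Finset.sum_cons, ← Finset.Icc_add_one_left_eq_Ioc]
  have hbR : (3 : ℝ) ≤ (bThresh n : ℝ) := by exact_mod_cast hb3
  have hnR : (32 : ℝ) ≤ (n : ℝ) := by exact_mod_cast hn
  have hbne : (bThresh n : ℝ) - 2 ≠ 0 := by linarith
  have hinv : ((bThresh n : ℝ) - 2) * (1 / ((bThresh n : ℝ) - 2)) = 1 := by
    field_simp
  set S := ∑ i ∈ Finset.Icc (bThresh n) n, (1 : ℝ) / ((i : ℝ) - 2) with hSdef
  set T := ∑ i ∈ Finset.Icc (bThresh n + 1) n, (1 : ℝ) / ((i : ℝ) - 2) with hTdef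
  set b := (bThresh n : ℝ) with hbRdef
  have hu : uVal n = (b - 2) * (2 * (n : ℝ) - 4) * S := rfl
  have hbp : (0 : ℝ) < b - 2 := by linarith
  have hnp : (0 : ℝ) < (n : ℝ) - 2 := by linarith
  constructor
  · rw [hu]
    nlinarith [mul_pos (mul_pos hbp hnp) (by linarith : (0 : ℝ) < 2 * S - 1)]
  · rw [hu, hsplit]
    have h2 : (2 * (n : ℝ) - 4) * ((b - 2) * (1 / (b - 2))) = 2 * (n : ℝ) - 4 := by
      rw [hinv]; ring
    nlinarith [mul_nonneg (mul_nonneg hnp.le hbp.le) (by linarith : (0 : ℝ) ≤ 1 - 2 * T), h2]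
end

section
/- For every integer n ≥ 32, f_n(b_n - 1) < 0 and f_n(b_n) < 0, where f_n(x) = 3x² - (1+4n)x + (n-2)b_n + 2(n+1) + u_n. -/
open Finset

private lemma sum_inv_le_log (a : ℕ) (ha : 3 ≤ a) : ∀ b : ℕ, a ≤ b →
    ∑ i ∈ Finset.Icc (a+1) b, (1:ℝ)/((i:ℝ)-2) ≤ Real.log ((b:ℝ)-2) - Real.log ((a:ℝ)-2) := by
  intro b hab
  induction b, hab using Nat.le_induction with
  | base => simp
  | succ m hm ih =>
    rw [Finset.sum_Icc_succ_top (by omega)]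
    have h2 : (0:ℝ) < (m:ℝ) - 2 := by
      have : (3:ℝ) ≤ (m:ℝ) := by exact_mod_cast le_trans ha hm
      linarith
    have hlog : (1:ℝ)/((m:ℝ)+1-2) ≤ Real.log ((m:ℝ)+1-2) - Real.log ((m:ℝ)-2) := by
      have hkey := Real.log_le_sub_one_of_pos (x := ((m:ℝ)-2)/((m:ℝ)+1-2)) (by apply div_pos h2; linarith)
      rw [Real.log_div (by linarith) (by linarith)] at hkey
      have hne : ((m:ℝ)+1-2) ≠ 0 := by linarith
      have h3 : ((m:ℝ)-2)/((m:ℝ)+1-2) - 1 = -(1/((m:ℝ)+1-2)) := by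
        rw [div_sub_one hne, show (m:ℝ)-2-((m:ℝ)+1-2) = -1 by ring, neg_div, one_div]
      linarith [h3 ▸ hkey]
    push_cast
    linarith

private lemma sum_gt_half (n j : ℕ) (hn : 32 ≤ n) (hj2 : 2 ≤ j) (hj : j ≤ 3) :
    ¬ (∑ i ∈ Finset.Icc (j + 1) n, (1 : ℝ) / ((i : ℝ) - 2) ≤ 1 / 2) := by
  push_neg
  have hsub : (Finset.Icc 4 5 : Finset ℕ) ⊆ Finset.Icc (j+1) n := by
    intro x hx
    simp only [Finset.mem_Icc] at *
    omega
  have hmono : ∑ i ∈ (Finset.Icc 4 5 : Finset ℕ), (1:ℝ)/((i:ℝ)-2) ≤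
      ∑ i ∈ Finset.Icc (j+1) n, (1:ℝ)/((i:ℝ)-2) := by
    apply Finset.sum_le_sum_of_subset_of_nonneg hsub
    intro i hi _
    simp only [Finset.mem_Icc] at hi
    have h3 : (3:ℝ) ≤ (i:ℝ) := by exact_mod_cast (by omega : 3 ≤ i)
    have h2 : (0:ℝ) < (i:ℝ) - 2 := by linarith
    positivity
  have : ∑ i ∈ (Finset.Icc 4 5 : Finset ℕ), (1:ℝ)/((i:ℝ)-2) = 1/2 + 1/3 := by
    rw [show (Finset.Icc 4 5 : Finset ℕ) = {4, 5} from rfl]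
    norm_num
  linarith

theorem fPoly_neg_at_bThresh (n : ℕ) (hn : 32 ≤ n) :
    fPoly n ((bThresh n : ℝ) - 1) < 0 ∧ fPoly n (bThresh n : ℝ) < 0 := by
  set S : Set ℕ := {j : ℕ | 2 ≤ j ∧ j ≤ n ∧
    ∑ i ∈ Finset.Icc (j + 1) n, (1 : ℝ) / ((i : ℝ) - 2) ≤ 1 / 2} with hS
  have hSne : S.Nonempty := by
    refine ⟨n, by omega, le_refl n, ?_⟩
    rw [Finset.Icc_eq_empty (by omega)]
    norm_num
  have hbdef : bThresh n = sInf S := rfl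
  have hbmem : bThresh n ∈ S := hbdef ▸ Nat.sInf_mem hSne
  obtain ⟨hb2, hbn, hT⟩ := hbmem
  set b := bThresh n with hbeq
  -- b ≥ 4
  have hb4 : 4 ≤ b := by
    by_contra h
    interval_cases b <;> exact sum_gt_half n _ hn (by omega) (by omega) hT
  -- b ≤ 2n/3
  have hb23 : 3 * b ≤ 2 * n := by
    set j := 2 * n / 3 with hj
    have hj3 : 21 ≤ j := by omega
    have hjn : j ≤ n := by omega
    have h3j : 2 * n ≤ 3 * j + 2 := by omega
    have hjmem : j ∈ S := by
      refine ⟨by omega, hjn, ?_⟩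
      have hE : (1.64:ℝ) ≤ Real.exp (1/2) := by
        have he : Real.exp (1/2) * Real.exp (1/2) = Real.exp 1 := by
          rw [← Real.exp_add]; norm_num
        nlinarith [Real.exp_one_gt_d9, Real.exp_pos (1/2)]
      have hjR : (2:ℝ) * n ≤ 3 * (j:ℝ) + 2 := by exact_mod_cast h3j
      have hnR : (32:ℝ) ≤ (n:ℝ) := by exact_mod_cast hn
      have hjpos : (0:ℝ) ≤ (j:ℝ) - 2 := by
        have : (21:ℝ) ≤ (j:ℝ) := by exact_mod_cast hj3
        linarith
      have hkey : (n:ℝ) - 2 ≤ ((j:ℝ) - 2) * Real.exp (1/2) := by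
        nlinarith [mul_le_mul_of_nonneg_left hE hjpos]
      calc ∑ i ∈ Finset.Icc (j + 1) n, (1 : ℝ) / ((i : ℝ) - 2)
          ≤ Real.log ((n:ℝ)-2) - Real.log ((j:ℝ)-2) :=
            sum_inv_le_log j (by omega) n hjn
        _ ≤ 1/2 := by
            have hjp : (0:ℝ) < (j:ℝ) - 2 := by
              have : (21:ℝ) ≤ (j:ℝ) := by exact_mod_cast hj3
              linarith
            have h1 : Real.log ((n:ℝ)-2) ≤ Real.log (((j:ℝ)-2) * Real.exp (1/2)) := by
              apply Real.log_le_log (by linarith) hkey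
            rw [Real.log_mul (by linarith) (Real.exp_ne_zero _), Real.log_exp] at h1
            linarith
    have : b ≤ j := hbdef ▸ Nat.sInf_le hjmem
    omega
  -- split the sum
  have hsplit : ∑ i ∈ Finset.Icc b n, (1:ℝ)/((i:ℝ)-2)
      = 1/((b:ℝ)-2) + ∑ i ∈ Finset.Icc (b+1) n, (1:ℝ)/((i:ℝ)-2) := by
    rw [Finset.Icc_add_one_left_eq_Ioc, ← Finset.sum_Ioc_add_eq_sum_Icc hbn]
    ring
  -- cast facts
  have hB4 : (4:ℝ) ≤ (b:ℝ) := by exact_mod_cast hb4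
  have h3B : 3 * (b:ℝ) ≤ 2 * (n:ℝ) := by exact_mod_cast hb23
  have hNR : (32:ℝ) ≤ (n:ℝ) := by exact_mod_cast hn
  -- bound u
  have hu : uVal n ≤ ((b:ℝ)-2) * ((n:ℝ)-2) + (2*(n:ℝ)-4) := by
    rw [uVal, ← hbeq, hsplit]
    have hbne : ((b:ℝ)-2) ≠ 0 := by linarith
    have hc : ((b:ℝ)-2) * (2*(n:ℝ)-4) * (1/((b:ℝ)-2)) = 2*(n:ℝ)-4 := by
      field_simp
    nlinarith [hT, mul_nonneg (by linarith : (0:ℝ) ≤ (b:ℝ)-2) (by linarith : (0:ℝ) ≤ 2*(n:ℝ)-4)]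
  -- bound f(b)
  have hfb : fPoly n (b:ℝ) ≤ ((b:ℝ)-1) * (3*(b:ℝ)-2-2*(n:ℝ)) := by
    rw [fPoly, ← hbeq]
    nlinarith [hu]
  have hneg2 : fPoly n (b:ℝ) < 0 := by
    have : ((b:ℝ)-1) * (3*(b:ℝ)-2-2*(n:ℝ)) < 0 :=
      mul_neg_of_pos_of_neg (by linarith) (by linarith)
    linarith
  have hdiff : fPoly n ((b:ℝ)-1) = fPoly n (b:ℝ) + 4*(n:ℝ) + 4 - 6*(b:ℝ) := by
    rw [fPoly, fPoly]; ring
  have hneg1 : fPoly n ((b:ℝ)-1) < 0 := by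
    rw [hdiff]
    nlinarith [mul_nonneg (by linarith : (0:ℝ) ≤ (b:ℝ)-4)
      (by linarith : (0:ℝ) ≤ 2*(n:ℝ)-3*(b:ℝ))]
  exact ⟨hneg1, hneg2⟩
end

section
/- For every integer n ≥ 32, f_n((n+4)/3) > 0, where f_n(x) = 3x² - (1+4n)x + (n-2)b_n + 2(n+1) + u_n. Consequently, a_n := min{ j ≥ 2 : f_n(j) ≤ 0 } satisfies a_n > (n+4)/3. -/
open Finset

lemma sum_Icc_bot (a b : ℕ) (h : a ≤ b) (f : ℕ → ℝ) :
    ∑ i ∈ Finset.Icc a b, f i = f a + ∑ i ∈ Finset.Icc (a+1) b, f i := by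
  rw [Finset.Icc_add_one_left_eq_Ioc, ← Finset.Ioc_insert_left h, Finset.sum_insert (by simp)]

/-- Lower harmonic bound: `∑_{i=t+4}^{2t+2} 1/(i-2) > 1/2` for `t ≥ 6`. -/
lemma harm_low (t : ℕ) (ht : 6 ≤ t) :
    1/2 < ∑ i ∈ Finset.Icc (t+4) (2*t+2), (1:ℝ)/((i:ℝ)-2) := by
  induction t, ht using Nat.le_induction with
  | base =>
    have : Finset.Icc (6+4) (2*6+2) = ({10,11,12,13,14} : Finset ℕ) := by decide
    rw [this]
    norm_num [Finset.sum_insert, Finset.mem_insert, Finset.mem_singleton,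
      Finset.sum_singleton]
  | succ t ht ih =>
    have h1 : ∑ i ∈ Finset.Icc (t+4) (2*t+2+1), (1:ℝ)/((i:ℝ)-2)
        = (∑ i ∈ Finset.Icc (t+4) (2*t+2), (1:ℝ)/((i:ℝ)-2)) + 1/(((2*t+3:ℕ):ℝ)-2) := by
      exact_mod_cast Finset.sum_Icc_succ_top (by omega) _
    have h2 : ∑ i ∈ Finset.Icc (t+4) (2*t+3+1), (1:ℝ)/((i:ℝ)-2)
        = (∑ i ∈ Finset.Icc (t+4) (2*t+3), (1:ℝ)/((i:ℝ)-2)) + 1/(((2*t+4:ℕ):ℝ)-2) := by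
      exact_mod_cast Finset.sum_Icc_succ_top (by omega) _
    have h3 : ∑ i ∈ Finset.Icc (t+4) (2*t+4), (1:ℝ)/((i:ℝ)-2)
        = 1/(((t+4:ℕ):ℝ)-2) + ∑ i ∈ Finset.Icc (t+4+1) (2*t+4), (1:ℝ)/((i:ℝ)-2) :=
      sum_Icc_bot _ _ (by omega) _
    have e1 : 2*t+2+1 = 2*t+3 := by omega
    have e2 : 2*t+3+1 = 2*t+4 := by omega
    have e3 : 2*(t+1)+2 = 2*t+4 := by omega
    have e4 : t+1+4 = t+4+1 := by omega
    rw [e1] at h1; rw [e2] at h2; rw [e3, e4]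
    have hT : (6:ℝ) ≤ (t:ℝ) := by exact_mod_cast ht
    have c1 : ((2*t+3:ℕ):ℝ)-2 = 2*(t:ℝ)+1 := by push_cast; ring
    have c2 : ((2*t+4:ℕ):ℝ)-2 = 2*(t:ℝ)+2 := by push_cast; ring
    have c3 : ((t+4:ℕ):ℝ)-2 = (t:ℝ)+2 := by push_cast; ring
    rw [c1] at h1; rw [c2] at h2; rw [c3] at h3
    have key : (1:ℝ)/((t:ℝ)+2) ≤ 1/(2*(t:ℝ)+1) + 1/(2*(t:ℝ)+2) := by
      rw [div_add_div _ _ (by positivity) (by positivity),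
        div_le_div_iff₀ (by positivity) (by positivity)]
      nlinarith
    linarith [h1, h2, h3, ih]

/-- Upper harmonic bound: `∑_{i=2s+3}^{3s+3} 1/(i-2) ≤ 1/2` for `s ≥ 10`. -/
lemma harm_up (s : ℕ) (hs : 10 ≤ s) :
    ∑ i ∈ Finset.Icc (2*s+3) (3*s+3), (1:ℝ)/((i:ℝ)-2) ≤ 1/2 := by
  induction s, hs using Nat.le_induction with
  | base =>
    have : Finset.Icc (2*10+3) (3*10+3) = ({23,24,25,26,27,28,29,30,31,32,33} : Finset ℕ) := by
      decide
    rw [this]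
    norm_num [Finset.sum_insert, Finset.mem_insert, Finset.mem_singleton,
      Finset.sum_singleton]
  | succ s hs ih =>
    have h1 : ∑ i ∈ Finset.Icc (2*s+3) (3*s+4), (1:ℝ)/((i:ℝ)-2)
        = (∑ i ∈ Finset.Icc (2*s+3) (3*s+3), (1:ℝ)/((i:ℝ)-2)) + 1/(((3*s+4:ℕ):ℝ)-2) := by
      have := Finset.sum_Icc_succ_top (a := 2*s+3) (b := 3*s+3)
        (by omega) (fun i => (1:ℝ)/((i:ℝ)-2))
      simpa [show 3*s+3+1 = 3*s+4 by omega] using this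
    have h2 : ∑ i ∈ Finset.Icc (2*s+3) (3*s+5), (1:ℝ)/((i:ℝ)-2)
        = (∑ i ∈ Finset.Icc (2*s+3) (3*s+4), (1:ℝ)/((i:ℝ)-2)) + 1/(((3*s+5:ℕ):ℝ)-2) := by
      have := Finset.sum_Icc_succ_top (a := 2*s+3) (b := 3*s+4)
        (by omega) (fun i => (1:ℝ)/((i:ℝ)-2))
      simpa [show 3*s+4+1 = 3*s+5 by omega] using this
    have h3 : ∑ i ∈ Finset.Icc (2*s+3) (3*s+6), (1:ℝ)/((i:ℝ)-2)
        = (∑ i ∈ Finset.Icc (2*s+3) (3*s+5), (1:ℝ)/((i:ℝ)-2)) + 1/(((3*s+6:ℕ):ℝ)-2) := by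
      have := Finset.sum_Icc_succ_top (a := 2*s+3) (b := 3*s+5)
        (by omega) (fun i => (1:ℝ)/((i:ℝ)-2))
      simpa [show 3*s+5+1 = 3*s+6 by omega] using this
    have h4 : ∑ i ∈ Finset.Icc (2*s+3) (3*s+6), (1:ℝ)/((i:ℝ)-2)
        = 1/(((2*s+3:ℕ):ℝ)-2) + ∑ i ∈ Finset.Icc (2*s+4) (3*s+6), (1:ℝ)/((i:ℝ)-2) := by
      have := sum_Icc_bot (2*s+3) (3*s+6) (by omega) (fun i => (1:ℝ)/((i:ℝ)-2))
      simpa [show 2*s+3+1 = 2*s+4 by omega] using this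
    have h5 : ∑ i ∈ Finset.Icc (2*s+4) (3*s+6), (1:ℝ)/((i:ℝ)-2)
        = 1/(((2*s+4:ℕ):ℝ)-2) + ∑ i ∈ Finset.Icc (2*s+5) (3*s+6), (1:ℝ)/((i:ℝ)-2) := by
      have := sum_Icc_bot (2*s+4) (3*s+6) (by omega) (fun i => (1:ℝ)/((i:ℝ)-2))
      simpa [show 2*s+4+1 = 2*s+5 by omega] using this
    have hgoal : 2*(s+1)+3 = 2*s+5 := by omega
    have hgoal2 : 3*(s+1)+3 = 3*s+6 := by omega
    rw [hgoal, hgoal2]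
    have hS : (0:ℝ) ≤ (s:ℝ) := Nat.cast_nonneg s
    have c1 : ((3*s+4:ℕ):ℝ)-2 = 3*(s:ℝ)+2 := by push_cast; ring
    have c2 : ((3*s+5:ℕ):ℝ)-2 = 3*(s:ℝ)+3 := by push_cast; ring
    have c3 : ((3*s+6:ℕ):ℝ)-2 = 3*(s:ℝ)+4 := by push_cast; ring
    have c4 : ((2*s+3:ℕ):ℝ)-2 = 2*(s:ℝ)+1 := by push_cast; ring
    have c5 : ((2*s+4:ℕ):ℝ)-2 = 2*(s:ℝ)+2 := by push_cast; ring
    rw [c1] at h1; rw [c2] at h2; rw [c3] at h3; rw [c4] at h4; rw [c5] at h5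
    have a1 : (1:ℝ)/(3*(s:ℝ)+2) ≤ 2/3*(1/(2*(s:ℝ)+1)) := by
      rw [mul_one_div, div_le_div_iff₀ (by positivity) (by positivity)]
      linarith
    have a2 : (1:ℝ)/(3*(s:ℝ)+3) ≤ 1/3*(1/(2*(s:ℝ)+1)) + 1/3*(1/(2*(s:ℝ)+2)) := by
      have b1 : (1:ℝ)/(2*(s:ℝ)+2) ≤ 1/(2*(s:ℝ)+1) := by
        apply one_div_le_one_div_of_le (by positivity); linarith
      have b2 : (1:ℝ)/(3*(s:ℝ)+3) = 2/3*(1/(2*(s:ℝ)+2)) := by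
        rw [mul_one_div, div_eq_div_iff (by positivity) (by positivity)]; ring
      rw [b2]; linarith
    have a3 : (1:ℝ)/(3*(s:ℝ)+4) ≤ 2/3*(1/(2*(s:ℝ)+2)) := by
      rw [mul_one_div, div_le_div_iff₀ (by positivity) (by positivity)]
      linarith
    generalize hA : ∑ i ∈ Finset.Icc (2*s+3) (3*s+3), (1:ℝ)/((i:ℝ)-2) = A at *
    generalize hB : ∑ i ∈ Finset.Icc (2*s+3) (3*s+4), (1:ℝ)/((i:ℝ)-2) = B at *
    generalize hC : ∑ i ∈ Finset.Icc (2*s+3) (3*s+5), (1:ℝ)/((i:ℝ)-2) = C at *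
    generalize hD : ∑ i ∈ Finset.Icc (2*s+3) (3*s+6), (1:ℝ)/((i:ℝ)-2) = D at *
    generalize hE : ∑ i ∈ Finset.Icc (2*s+4) (3*s+6), (1:ℝ)/((i:ℝ)-2) = E at *
    generalize hF : ∑ i ∈ Finset.Icc (2*s+5) (3*s+6), (1:ℝ)/((i:ℝ)-2) = F at *
    linarith

/-- Shifted upper bound: `∑_{i=2s+4}^{3s+4} 1/(i-2) ≤ 1/2` for `s ≥ 10`. -/
lemma harm_up' (s : ℕ) (hs : 10 ≤ s) :
    ∑ i ∈ Finset.Icc (2*s+4) (3*s+4), (1:ℝ)/((i:ℝ)-2) ≤ 1/2 := by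
  have h1 : ∑ i ∈ Finset.Icc (2*s+4) (3*s+4), (1:ℝ)/((i:ℝ)-2)
      = (∑ i ∈ Finset.Icc (2*s+4) (3*s+3), (1:ℝ)/((i:ℝ)-2)) + 1/(((3*s+4:ℕ):ℝ)-2) := by
    have := Finset.sum_Icc_succ_top (a := 2*s+4) (b := 3*s+3)
      (by omega) (fun i => (1:ℝ)/((i:ℝ)-2))
    simpa [show 3*s+3+1 = 3*s+4 by omega] using this
  have h2 : ∑ i ∈ Finset.Icc (2*s+3) (3*s+3), (1:ℝ)/((i:ℝ)-2)
      = 1/(((2*s+3:ℕ):ℝ)-2) + ∑ i ∈ Finset.Icc (2*s+4) (3*s+3), (1:ℝ)/((i:ℝ)-2) := by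
    have := sum_Icc_bot (2*s+3) (3*s+3) (by omega) (fun i => (1:ℝ)/((i:ℝ)-2))
    simpa [show 2*s+3+1 = 2*s+4 by omega] using this
  have c1 : ((3*s+4:ℕ):ℝ)-2 = 3*(s:ℝ)+2 := by push_cast; ring
  have c4 : ((2*s+3:ℕ):ℝ)-2 = 2*(s:ℝ)+1 := by push_cast; ring
  rw [c1] at h1; rw [c4] at h2
  have hcmp : (1:ℝ)/(3*(s:ℝ)+2) ≤ 1/(2*(s:ℝ)+1) := by
    apply one_div_le_one_div_of_le (by positivity)
    have : (0:ℝ) ≤ (s:ℝ) := Nat.cast_nonneg s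
    linarith
  have := harm_up s hs
  linarith

set_option maxHeartbeats 1000000 in
theorem fPoly_pos_and_aThresh_lower (n : ℕ) (hn : 32 ≤ n) :
    fPoly n (((n : ℝ) + 4) / 3) > 0 ∧ ((n : ℝ) + 4) / 3 < (aThresh n : ℝ) := by
  have hnR : (32:ℝ) ≤ (n:ℝ) := by exact_mod_cast hn
  have gnn : ∀ i : ℕ, 2 ≤ i → (0:ℝ) ≤ 1/((i:ℝ)-2) := by
    intro i hi
    have h2 : (2:ℝ) ≤ (i:ℝ) := by exact_mod_cast hi
    rcases eq_or_lt_of_le h2 with h | h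
    · rw [← h]; norm_num
    · have : (0:ℝ) < (i:ℝ) - 2 := by linarith
      positivity
  have hBne : {j : ℕ | 2 ≤ j ∧ j ≤ n ∧
      ∑ i ∈ Finset.Icc (j + 1) n, (1 : ℝ) / ((i : ℝ) - 2) ≤ 1 / 2}.Nonempty := by
    refine ⟨n, by omega, le_refl n, ?_⟩
    rw [Finset.Icc_eq_empty (by omega), Finset.sum_empty]; norm_num
  have hbmem : bThresh n ∈ {j : ℕ | 2 ≤ j ∧ j ≤ n ∧
      ∑ i ∈ Finset.Icc (j + 1) n, (1 : ℝ) / ((i : ℝ) - 2) ≤ 1 / 2} := Nat.sInf_mem hBne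
  obtain ⟨hb2, hbn, hSplus⟩ := hbmem
  -- Step A : n + 5 ≤ 2 b
  have hblow : n + 5 ≤ 2 * bThresh n := by
    by_contra hcon
    push_neg at hcon
    have ht6 : 6 ≤ n/2 - 1 := by omega
    have hsub : Finset.Icc (n/2-1+4) (2*(n/2-1)+2) ⊆ Finset.Icc (bThresh n + 1) n :=
      Finset.Icc_subset_Icc (by omega) (by omega)
    have hmono : ∑ i ∈ Finset.Icc (n/2-1+4) (2*(n/2-1)+2), (1:ℝ)/((i:ℝ)-2)
        ≤ ∑ i ∈ Finset.Icc (bThresh n + 1) n, (1:ℝ)/((i:ℝ)-2) := by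
      apply Finset.sum_le_sum_of_subset_of_nonneg hsub
      intro i hi _
      exact gnn i (by have := (Finset.mem_Icc.mp hi).1; omega)
    have := harm_low (n/2-1) ht6
    linarith
  have hb3 : 3 ≤ bThresh n := by omega
  -- Step B : minimality gives the full sum > 1/2
  have hS : 1/2 < ∑ i ∈ Finset.Icc (bThresh n) n, (1:ℝ)/((i:ℝ)-2) := by
    have hnot : bThresh n - 1 ∉ {j : ℕ | 2 ≤ j ∧ j ≤ n ∧
        ∑ i ∈ Finset.Icc (j + 1) n, (1 : ℝ) / ((i : ℝ) - 2) ≤ 1 / 2} :=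
      Nat.notMem_of_lt_sInf (show bThresh n - 1 < bThresh n by omega)
    by_contra hcon
    push_neg at hcon
    refine hnot ⟨by omega, by omega, ?_⟩
    rw [show bThresh n - 1 + 1 = bThresh n by omega]
    exact hcon
  -- Step C : 3 b ≤ 2 n + 2
  have hbup : 3 * bThresh n ≤ 2 * n + 2 := by
    by_contra hcon
    push_neg at hcon
    have h3 : n % 3 = 0 ∨ n % 3 = 1 ∨ n % 3 = 2 := by omega
    have key : ∀ s : ℕ, 10 ≤ s → ∀ lo hi : ℕ,
        Finset.Icc (bThresh n) n ⊆ Finset.Icc lo hi → 2 ≤ lo →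
        (∑ i ∈ Finset.Icc lo hi, (1:ℝ)/((i:ℝ)-2) ≤ 1/2) → False := by
      intro s _ lo hi hsub hlo hle
      have hmono : ∑ i ∈ Finset.Icc (bThresh n) n, (1:ℝ)/((i:ℝ)-2)
          ≤ ∑ i ∈ Finset.Icc lo hi, (1:ℝ)/((i:ℝ)-2) := by
        apply Finset.sum_le_sum_of_subset_of_nonneg hsub
        intro i hi' _
        exact gnn i (le_trans hlo (Finset.mem_Icc.mp hi').1)
      linarith
    rcases h3 with h3 | h3 | h3
    · exact key (n/3-1) (by omega) _ _
        (Finset.Icc_subset_Icc (by omega) (by omega)) (by omega)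
        (harm_up (n/3-1) (by omega))
    · exact key ((n-4)/3) (by omega) _ _
        (Finset.Icc_subset_Icc (by omega) (by omega)) (by omega)
        (harm_up' ((n-4)/3) (by omega))
    · exact key ((n-2)/3) (by omega) _ _
        (Finset.Icc_subset_Icc (by omega) (by omega)) (by omega)
        (harm_up ((n-2)/3) (by omega))
  -- real versions
  have hB1 : (n:ℝ) + 5 ≤ 2 * (bThresh n : ℝ) := by exact_mod_cast hblow
  have hB2 : 3 * (bThresh n : ℝ) ≤ 2 * (n:ℝ) + 2 := by exact_mod_cast hbup
  have hB3 : (3:ℝ) ≤ (bThresh n : ℝ) := by exact_mod_cast hb3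
  have hBpos : (0:ℝ) < (bThresh n : ℝ) - 2 := by linarith
  have hsplit : ∑ i ∈ Finset.Icc (bThresh n) n, (1:ℝ)/((i:ℝ)-2)
      = 1/((bThresh n : ℝ)-2) + ∑ i ∈ Finset.Icc (bThresh n + 1) n, (1:ℝ)/((i:ℝ)-2) :=
    sum_Icc_bot (bThresh n) n hbn _
  have hSup : ∑ i ∈ Finset.Icc (bThresh n) n, (1:ℝ)/((i:ℝ)-2)
      ≤ 1/((bThresh n : ℝ)-2) + 1/2 := by
    rw [hsplit]; linarith
  have huv : uVal n = ((bThresh n : ℝ) - 2) * (2*(n:ℝ) - 4) *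
      ∑ i ∈ Finset.Icc (bThresh n) n, (1:ℝ)/((i:ℝ)-2) := by
    rw [uVal]
  have hu_low : ((bThresh n : ℝ)-2) * ((n:ℝ)-2) < uVal n := by
    rw [huv]
    nlinarith [hS, mul_pos hBpos (show (0:ℝ) < 2*(n:ℝ)-4 by linarith)]
  have hu_up : uVal n ≤ 2*(n:ℝ) - 4 + ((bThresh n : ℝ)-2) * ((n:ℝ)-2) := by
    rw [huv]
    have h1 : ((bThresh n : ℝ) - 2) * (2*(n:ℝ) - 4) *
        (∑ i ∈ Finset.Icc (bThresh n) n, (1:ℝ)/((i:ℝ)-2))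
        ≤ ((bThresh n : ℝ) - 2) * (2*(n:ℝ) - 4) * (1/((bThresh n : ℝ)-2) + 1/2) := by
      apply mul_le_mul_of_nonneg_left hSup
      apply mul_nonneg (le_of_lt hBpos); linarith
    have h2 : ((bThresh n : ℝ) - 2) * (2*(n:ℝ) - 4) * (1/((bThresh n : ℝ)-2) + 1/2)
        = 2*(n:ℝ) - 4 + ((bThresh n : ℝ)-2) * ((n:ℝ)-2) := by
      field_simp
      ring
    linarith
  -- Part 1
  have part1 : fPoly n (((n : ℝ) + 4) / 3) > 0 := by
    rw [fPoly]
    nlinarith [hu_low, mul_nonneg (show (0:ℝ) ≤ (n:ℝ) - 2 by linarith)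
      (show (0:ℝ) ≤ 2*(bThresh n : ℝ) - (n:ℝ) - 5 by linarith)]
  refine ⟨part1, ?_⟩
  -- Part 2
  have hj1 : 2*n ≤ 3*((2*n+2)/3) := by omega
  have hj2 : 3*((2*n+2)/3) ≤ 2*n+2 := by omega
  have hJ1 : 2*(n:ℝ) ≤ 3*(((2*n+2)/3 : ℕ):ℝ) := by exact_mod_cast hj1
  have hJ2 : 3*(((2*n+2)/3 : ℕ):ℝ) ≤ 2*(n:ℝ)+2 := by exact_mod_cast hj2
  have hfj : fPoly n (((2*n+2)/3 : ℕ):ℝ) ≤ 0 := by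
    rw [fPoly]
    nlinarith [hu_up,
      mul_nonneg (show (0:ℝ) ≤ 3*(((2*n+2)/3 : ℕ):ℝ) - 2*(n:ℝ) + 1 by linarith)
        (show (0:ℝ) ≤ 2*(n:ℝ) + 2 - 3*(((2*n+2)/3 : ℕ):ℝ) by linarith),
      mul_nonneg (show (0:ℝ) ≤ (n:ℝ) - 2 by linarith)
        (show (0:ℝ) ≤ 4*(n:ℝ) - 2 - (6*(bThresh n : ℝ) - 6) by linarith)]
  have hAne : {k : ℕ | 2 ≤ k ∧ k ≤ n ∧ fPoly n (k : ℝ) ≤ 0}.Nonempty :=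
    ⟨(2*n+2)/3, by omega, by omega, hfj⟩
  have hamem : aThresh n ∈ {k : ℕ | 2 ≤ k ∧ k ≤ n ∧ fPoly n (k : ℝ) ≤ 0} :=
    Nat.sInf_mem hAne
  obtain ⟨ha2, han, hfa⟩ := hamem
  by_contra hcon
  push_neg at hcon
  have hmono : fPoly n (((n : ℝ) + 4) / 3) ≤ fPoly n ((aThresh n : ℝ)) := by
    rw [fPoly, fPoly]
    nlinarith [mul_nonneg (show (0:ℝ) ≤ ((n:ℝ)+4)/3 - (aThresh n : ℝ) by linarith)
      (show (0:ℝ) ≤ 4*(n:ℝ) + 1 - 3*(((n:ℝ)+4)/3 + (aThresh n : ℝ)) by linarith)]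
  linarith
end

section
/- For every integer n ≥ 3, the map j ↦ ((j-1)/(n-j)) ∑_{i=j+1}^{n} 1/(i-2) is strictly increasing in j on the range 2 ≤ j < n. -/
open Finset

lemma ratio_sum_step (n j : ℕ) (hj : 2 ≤ j) (hjn : j + 2 ≤ n) :
    ((j : ℝ) - 1) / ((n : ℝ) - (j : ℝ)) * ∑ i ∈ Finset.Icc (j + 1) n, (1 : ℝ) / ((i : ℝ) - 2) <
      ((j : ℝ)) / ((n : ℝ) - (j : ℝ) - 1) * ∑ i ∈ Finset.Icc (j + 2) n, (1 : ℝ) / ((i : ℝ) - 2) := by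
  have hx : (2 : ℝ) ≤ (j : ℝ) := by exact_mod_cast hj
  have hNx : (j : ℝ) + 2 ≤ (n : ℝ) := by exact_mod_cast hjn
  set x : ℝ := (j : ℝ) with hxdef
  set N : ℝ := (n : ℝ) with hNdef
  have h1 : (0 : ℝ) < x - 1 := by linarith
  have h2 : (0 : ℝ) < N - x := by linarith
  have h3 : (0 : ℝ) < N - x - 1 := by linarith
  have h4 : (0 : ℝ) < N - 1 := by linarith
  set S : ℝ := ∑ i ∈ Finset.Icc (j + 2) n, (1 : ℝ) / ((i : ℝ) - 2) with hSdef
  have hne : (Finset.Icc (j + 2) n).Nonempty := by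
    rw [Finset.nonempty_Icc]; omega
  have hlb : ∑ i ∈ Finset.Icc (j + 2) n, (1 : ℝ) / (N - 1) < S := by
    apply Finset.sum_lt_sum_of_nonempty hne
    intro i hi
    rw [Finset.mem_Icc] at hi
    have hi2 : (4 : ℝ) ≤ (i : ℝ) := by
      have : 4 ≤ i := by omega
      exact_mod_cast this
    have hiN : (i : ℝ) ≤ N := by rw [hNdef]; exact_mod_cast hi.2
    apply one_div_lt_one_div_of_lt <;> linarith
  have hcard : ((Finset.Icc (j + 2) n).card : ℝ) = N - x - 1 := by
    rw [Nat.card_Icc]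
    have h5 : n + 1 - (j + 2) = n - (j + 1) := by omega
    rw [h5, Nat.cast_sub (by omega : j + 1 ≤ n)]
    push_cast
    ring
  have hS : N - x - 1 < S * (N - 1) := by
    rw [Finset.sum_const, nsmul_eq_mul, hcard] at hlb
    have := (mul_lt_mul_of_pos_right hlb h4)
    rw [mul_assoc, one_div, inv_mul_cancel₀ (ne_of_gt h4), mul_one] at this
    linarith [this]
  have hins : Finset.Icc (j + 1) n = insert (j + 1) (Finset.Icc (j + 2) n) := by
    ext y
    simp only [Finset.mem_Icc, Finset.mem_insert]
    omega
  rw [hins, Finset.sum_insert (by simp only [Finset.mem_Icc]; omega)]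
  have hterm : (1 : ℝ) / (((j + 1 : ℕ) : ℝ) - 2) = 1 / (x - 1) := by
    rw [hxdef]; push_cast; ring_nf
  rw [hterm]
  have key : (x - 1) * (1 / (x - 1) + S) = 1 + (x - 1) * S := by
    field_simp
  rw [div_mul_eq_mul_div, div_mul_eq_mul_div, div_lt_div_iff₀ h2 h3, key]
  nlinarith [hS, mul_pos h1 h3]

theorem ratio_sum_strictMono (n : ℕ) (hn : 3 ≤ n) (j k : ℕ)
    (hj : 2 ≤ j) (hjk : j < k) (hk : k < n) :
    ((j : ℝ) - 1) / ((n : ℝ) - (j : ℝ)) * ∑ i ∈ Finset.Icc (j + 1) n, (1 : ℝ) / ((i : ℝ) - 2) <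
      ((k : ℝ) - 1) / ((n : ℝ) - (k : ℝ)) * ∑ i ∈ Finset.Icc (k + 1) n, (1 : ℝ) / ((i : ℝ) - 2) := by
  induction k, hjk using Nat.le_induction with
  | base =>
    rw [show j + 1 + 1 = j + 2 from by omega,
        show ((j + 1 : ℕ) : ℝ) = (j : ℝ) + 1 from by push_cast; ring,
        show (j : ℝ) + 1 - 1 = (j : ℝ) from by ring,
        show (n : ℝ) - ((j : ℝ) + 1) = (n : ℝ) - (j : ℝ) - 1 from by ring]
    exact ratio_sum_step n j hj (by omega)
  | succ m hm ih =>
    have hmn : m < n := by omega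
    have h1 := ih hmn
    have h2 := ratio_sum_step n m (by omega) (by omega)
    rw [show m + 1 + 1 = m + 2 from by omega,
        show ((m + 1 : ℕ) : ℝ) = (m : ℝ) + 1 from by push_cast; ring,
        show (m : ℝ) + 1 - 1 = (m : ℝ) from by ring,
        show (n : ℝ) - ((m : ℝ) + 1) = (n : ℝ) - (m : ℝ) - 1 from by ring]
    linarith [h1, h2]
end

section
/- With the convention C(m,k)=0 when k<0 or m<k, for integers n ≥ 1, 1 ≤ d < c ≤ n+1 and 1 ≤ j ≤ n+1: C(n, j-1) = ∑_{i=1}^{d} C(c-1, i-1) C(n-c+1, j-i) + ∑_{ℓ=d}^{c-1} C(ℓ-1, d-1) C(n-ℓ, j-d-1). -/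
/-!
Induct on `c`, starting at `c = 1`, where the first sum collapses to its `i = 1` term and the
second is empty. Moving the boundary from `c` to `c + 1` applies Pascal's rule to both factors of the
first sum; the result telescopes in `i`, so the first sum drops by exactly
`C(c-1, d-1) C(n-c, j-d-1)`, which is the new term `l = c` of the second sum.
-/

open Finset

/-- Binomial coefficient `C(m,k)` with the convention that `C(m,k) = 0`
whenever `m < k` or `k < 0` or `m < 0`, and `C(0,0) = 1`. -/
def intChoose (m k : ℤ) : ℕ :=
  if 0 ≤ k ∧ k ≤ m then (m.toNat).choose k.toNat else 0

lemma intChoose_of_neg {m k : ℤ} (h : k < 0) : intChoose m k = 0 :=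
  if_neg (by omega)

lemma intChoose_of_lt {m k : ℤ} (h : m < k) : intChoose m k = 0 :=
  if_neg (by omega)

lemma intChoose_natCast (m k : ℕ) : intChoose m k = m.choose k := by
  by_cases h : k ≤ m
  · simp [intChoose, h]
  · simp [intChoose, Nat.choose_eq_zero_of_lt (not_le.mp h), h]

lemma intChoose_add_one {m : ℤ} (hm : 0 ≤ m) (k : ℤ) :
    intChoose (m + 1) k = intChoose m k + intChoose m (k - 1) := by
  lift m to ℕ using hm
  rcases lt_or_ge k 0 with hk | hk
  · simp only [intChoose_of_neg hk, intChoose_of_neg (show k - 1 < 0 by omega)]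
  lift k to ℕ using hk
  rcases k with _ | k
  · rw [intChoose_of_neg (k := ((0 : ℕ) : ℤ) - 1) (by simp), ← Nat.cast_add_one,
      intChoose_natCast, intChoose_natCast]
    simp
  · rw [Nat.cast_add_one, add_sub_cancel_right, ← Nat.cast_add_one, ← Nat.cast_add_one,
      intChoose_natCast, intChoose_natCast, intChoose_natCast, Nat.choose_succ_succ', add_comm]

lemma sum_Icc_intChoose_mul_succ_right {m r : ℤ} (hm : 0 ≤ m) (hr : 0 ≤ r) (j : ℤ) {d : ℤ}
    (hd : 0 ≤ d) :
    ∑ i ∈ Icc 1 d, intChoose m (i - 1) * intChoose (r + 1) (j - i) =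
      ∑ i ∈ Icc 1 d, intChoose (m + 1) (i - 1) * intChoose r (j - i) +
        intChoose m (d - 1) * intChoose r (j - d - 1) := by
  induction d, hd using Int.leInduction with
  | base => simp [intChoose_of_neg]
  | succ d hd ih =>
    rw [← insert_Icc_right_eq_Icc_add_one (by omega), sum_insert (by simp), sum_insert (by simp),
      ih, intChoose_add_one hm, intChoose_add_one hr, add_sub_cancel_right,
      show j - (d + 1) - 1 = j - d - 1 - 1 by ring, show j - (d + 1) = j - d - 1 by ring]
    ring

theorem intChoose_eq_sum_Icc_add_sum_Icc {n c d : ℤ} (j : ℤ) (hd : 1 ≤ d) (hc₁ : 1 ≤ c)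
    (hc : c ≤ n + 1) :
    intChoose n (j - 1) =
      (∑ i ∈ Icc 1 d, intChoose (c - 1) (i - 1) * intChoose (n - c + 1) (j - i)) +
        ∑ l ∈ Icc d (c - 1), intChoose (l - 1) (d - 1) * intChoose (n - l) (j - d - 1) := by
  induction c, hc₁ using Int.leInduction with
  | base =>
    rw [Icc_eq_empty (show ¬d ≤ 1 - 1 by omega), sum_empty, add_zero,
      sum_eq_single_of_mem 1 (by simp [hd])]
    · simp [intChoose]
    · intro i hi hi1
      rw [intChoose_of_lt (by simp only [mem_Icc] at hi; omega), zero_mul]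
  | succ c hc₁ ih =>
    have hlast : ∑ l ∈ Icc d c, intChoose (l - 1) (d - 1) * intChoose (n - l) (j - d - 1) =
        ∑ l ∈ Icc d (c - 1), intChoose (l - 1) (d - 1) * intChoose (n - l) (j - d - 1) +
          intChoose (c - 1) (d - 1) * intChoose (n - c) (j - d - 1) := by
      rcases lt_or_ge c d with hcd | hdc
      · rw [Icc_eq_empty (by omega), Icc_eq_empty (by omega), intChoose_of_lt (by omega)]
        simp
      · have hIcc := insert_Icc_right_eq_Icc_add_one (show d ≤ c - 1 + 1 by omega)
        rw [sub_add_cancel] at hIcc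
        rw [← hIcc, sum_insert (by simp), add_comm]
    rw [ih (by omega), add_sub_cancel_right, hlast, show n - (c + 1) + 1 = n - c by ring,
      sum_Icc_intChoose_mul_succ_right (by omega) (by omega) j (by omega), sub_add_cancel]
    ring

theorem choose_split_identity_general (n c d j : ℤ)
    (hd : 1 ≤ d) (hdc : d < c) (hc : c ≤ n + 1) :
    intChoose n (j - 1) =
      (∑ i ∈ Finset.Icc 1 d, intChoose (c - 1) (i - 1) * intChoose (n - c + 1) (j - i)) +
        ∑ l ∈ Finset.Icc d (c - 1), intChoose (l - 1) (d - 1) * intChoose (n - l) (j - d - 1) :=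
  intChoose_eq_sum_Icc_add_sum_Icc j hd (by omega) hc

theorem choose_split_identity (n c d j : ℤ)
    (hn : 1 ≤ n) (hd : 1 ≤ d) (hdc : d < c) (hc : c ≤ n + 1) (hj1 : 1 ≤ j) (hj2 : j ≤ n + 1) :
    intChoose n (j - 1) =
      (∑ i ∈ Finset.Icc 1 d, intChoose (c - 1) (i - 1) * intChoose (n - c + 1) (j - i)) +
        ∑ l ∈ Finset.Icc d (c - 1), intChoose (l - 1) (d - 1) * intChoose (n - l) (j - d - 1) :=
  choose_split_identity_general n c d j hd hdc hc
end

section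
/- For all integers 1 ≤ d ≤ j ≤ n, 1 ≤ c ≤ n, all strictly increasing sequences 1 ≤ t_1 < ... < t_c ≤ n and 1 ≤ s_1 < ... < s_d ≤ j, one has ∑_{i=1}^{d} ∑_{ℓ=1}^{c} C(t_ℓ - 1, s_i - 1) C(n - t_ℓ, j - s_i) ≤ ∑_{i=1}^{d} ∑_{ℓ=1}^{c} C(ℓ-1, i-1) C(n-ℓ, j-i). -/
open Finset

/-!
`C(t-1, s-1) C(n-t, j-s)` counts the `j`-subsets `A` of `{1, …, n}` in which `t` is the `s`-th
smallest element. Double counting turns the left-hand side, for any sets `S ⊆ {1, …, j}` of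
ranks and `T ⊆ {1, …, n}` of values, into the sum over all `j`-subsets `A` of the number of
`t ∈ A ∩ T` whose rank in `A` lies in `S`. Ranks are injective, so this number is at most
`min |S| |A ∩ T|`, and it equals `min d |A ∩ {1, …, c}|` when `S = {1, …, d}` and
`T = {1, …, c}`. Finally, a sum over `A` of a function of `|A ∩ T|` depends on `T` only through
`|T|`.
-/

theorem card_filter_card_inter_eq {α : Type*} [DecidableEq α] {U T : Finset α} (hTU : T ⊆ U)
    {j k : ℕ} (hkj : k ≤ j) :
    #{A ∈ powersetCard j U | #(A ∩ T) = k} = (#T).choose k * (#U - #T).choose (j - k) := by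
  rw [← card_sdiff_of_subset hTU, ← card_powersetCard, ← card_powersetCard, ← card_product]
  refine card_nbij' (fun A => (A ∩ T, A \ T)) (fun p => p.1 ∪ p.2) ?_ ?_ ?_ ?_
  · intro A hA
    simp only [coe_filter, mem_powersetCard, coe_product, Set.mem_prod, mem_coe] at hA ⊢
    obtain ⟨⟨hAU, hAj⟩, hAk⟩ := hA
    refine ⟨⟨inter_subset_right, hAk⟩, sdiff_subset_sdiff hAU le_rfl, ?_⟩
    have := card_inter_add_card_sdiff A T
    omega
  · rintro ⟨B, C⟩ h
    simp only [coe_filter, mem_powersetCard, coe_product, Set.mem_prod, mem_coe] at h ⊢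
    obtain ⟨⟨hB, hBk⟩, hC, hCk⟩ := h
    have hCT : Disjoint C T := disjoint_of_subset_left hC sdiff_disjoint
    have hinter : (B ∪ C) ∩ T = B := by
      rw [union_inter_distrib_right, inter_eq_left.2 hB, disjoint_iff_inter_eq_empty.1 hCT,
        union_empty]
    refine ⟨⟨union_subset (hB.trans hTU) (hC.trans sdiff_subset), ?_⟩, by rw [hinter, hBk]⟩
    rw [card_union_of_disjoint (disjoint_of_subset_left hB hCT.symm)]
    omega
  · intro A _
    exact sup_inf_sdiff A T
  · rintro ⟨B, C⟩ h
    simp only [coe_product, Set.mem_prod, mem_coe, mem_powersetCard] at h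
    obtain ⟨⟨hB, -⟩, hC, -⟩ := h
    have hCT : Disjoint C T := disjoint_of_subset_left hC sdiff_disjoint
    ext x <;> simp only [mem_inter, mem_union, mem_sdiff] <;> grind [Finset.disjoint_left]

theorem sum_powersetCard_comp_card_inter {α M : Type*} [DecidableEq α] [AddCommMonoid M]
    {U T : Finset α} (hTU : T ⊆ U) (j : ℕ) (f : ℕ → M) :
    ∑ A ∈ powersetCard j U, f #(A ∩ T) =
      ∑ k ∈ range (j + 1), ((#T).choose k * (#U - #T).choose (j - k)) • f k := by
  have hmaps : ∀ A ∈ powersetCard j U, #(A ∩ T) ∈ range (j + 1) := fun A hA => by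
    rw [mem_range, Nat.lt_succ_iff, ← (mem_powersetCard.1 hA).2]
    exact card_le_card inter_subset_left
  rw [← sum_fiberwise_of_maps_to hmaps]
  refine sum_congr rfl fun k hk => ?_
  rw [← card_filter_card_inter_eq hTU (Nat.lt_succ_iff.1 (mem_range.1 hk)), ← sum_const]
  exact sum_congr rfl fun A hA => by rw [(mem_filter.1 hA).2]

/-- For `x ∈ A` with `1 ≤ x`, the rank of `x` among the elements of `A`. -/
def rankIn (A : Finset ℕ) (x : ℕ) : ℕ := #(A ∩ Icc 1 x)

theorem rankIn_succ (A : Finset ℕ) (x : ℕ) :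
    rankIn A (x + 1) = rankIn A x + if x + 1 ∈ A then 1 else 0 := by
  rw [rankIn, rankIn, ← insert_Icc_right_eq_Icc_add_one (by omega)]
  split_ifs with h
  · rw [inter_insert_of_mem h, card_insert_of_notMem (by simp)]
  · rw [inter_insert_of_notMem h, add_zero]

theorem rankIn_insert_self {A : Finset ℕ} {t : ℕ} (ht : 1 ≤ t) (htA : t ∉ A) :
    rankIn (insert t A) t = #(A ∩ Ico 1 t) + 1 := by
  have : insert t A ∩ Icc 1 t = insert t (A ∩ Ico 1 t) := by
    ext x
    simp only [mem_inter, mem_insert, mem_Icc, mem_Ico]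
    grind
  rw [rankIn, this, card_insert_of_notMem (by simp [htA])]

theorem rankIn_strictMonoOn (A : Finset ℕ) : StrictMonoOn (rankIn A) {x | x ∈ A ∧ 1 ≤ x} := by
  rintro x - y ⟨hyA, hy⟩ hxy
  refine card_lt_card ⟨inter_subset_inter_left (Icc_subset_Icc_right hxy.le), fun h => ?_⟩
  have := h (mem_inter.2 ⟨hyA, mem_Icc.2 ⟨hy, le_rfl⟩⟩)
  simp only [mem_inter, mem_Icc] at this
  omega

/-- Removing `t` identifies these sets with the `(j-1)`-subsets of `{1, …, n} \ {t}` having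
`s - 1` elements below `t`. -/
theorem card_filter_rankIn_eq {n j s t : ℕ} (hs : 1 ≤ s) (hsj : s ≤ j) (ht : 1 ≤ t)
    (htn : t ≤ n) :
    #{A ∈ powersetCard j (Icc 1 n) | t ∈ A ∧ rankIn A t = s} =
      (t - 1).choose (s - 1) * (n - t).choose (j - s) := by
  have hsub : Ico 1 t ⊆ (Icc 1 n).erase t := fun x hx => by
    simp only [mem_Ico, mem_erase, mem_Icc] at hx ⊢
    omega
  have hcount := card_filter_card_inter_eq hsub (j := j - 1) (k := s - 1) (by omega)
  rw [Nat.card_Ico, card_erase_of_mem (mem_Icc.2 ⟨ht, htn⟩), Nat.card_Icc,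
    show n + 1 - 1 - 1 - (t - 1) = n - t by omega, show j - 1 - (s - 1) = j - s by omega]
    at hcount
  rw [← hcount]
  refine card_nbij' (fun A => A.erase t) (fun A => insert t A) ?_ ?_ ?_ ?_
  · intro A hA
    simp only [coe_filter, mem_powersetCard] at hA ⊢
    obtain ⟨⟨hAn, hAj⟩, htA, hrank⟩ := hA
    rw [← insert_erase htA, rankIn_insert_self ht (notMem_erase t A)] at hrank
    exact ⟨⟨erase_subset_erase t hAn, by rw [card_erase_of_mem htA, hAj]⟩, by omega⟩
  · intro A hA
    simp only [coe_filter, mem_powersetCard] at hA ⊢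
    obtain ⟨⟨hAn, hAj⟩, hrank⟩ := hA
    have htA : t ∉ A := fun h => by simpa using hAn h
    refine ⟨⟨insert_subset (mem_Icc.2 ⟨ht, htn⟩) (hAn.trans (erase_subset t _)), ?_⟩,
      mem_insert_self t A, by rw [rankIn_insert_self ht htA]; omega⟩
    rw [card_insert_of_notMem htA]
    omega
  · intro A hA
    exact insert_erase (mem_filter.1 hA).2.1
  · intro A hA
    exact erase_insert fun h => by simpa using (mem_powersetCard.1 (mem_filter.1 hA).1).1 h

theorem card_filter_rankIn_mem_le (A S T : Finset ℕ) (hT : ∀ t ∈ T, 1 ≤ t) :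
    #{t ∈ T | t ∈ A ∧ rankIn A t ∈ S} ≤ min #S #(A ∩ T) := by
  refine le_min (card_le_card_of_injOn (rankIn A) (fun t ht => (mem_filter.1 ht).2.2) ?_)
    (card_le_card fun t ht => ?_)
  · refine (rankIn_strictMonoOn A).injOn.mono fun t ht => ?_
    obtain ⟨htT, htA, -⟩ := mem_filter.1 ht
    exact ⟨htA, hT t htT⟩
  · obtain ⟨htT, htA, -⟩ := mem_filter.1 ht
    exact mem_inter.2 ⟨htA, htT⟩

theorem card_filter_rankIn_mem_Icc (A : Finset ℕ) (c d : ℕ) :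
    #{t ∈ Icc 1 c | t ∈ A ∧ rankIn A t ∈ Icc 1 d} = min d (rankIn A c) := by
  induction c with
  | zero => simp [rankIn]
  | succ c ih =>
    rw [← insert_Icc_right_eq_Icc_add_one (by omega), filter_insert, rankIn_succ]
    by_cases h : c + 1 ∈ A
    · rw [if_pos h]
      by_cases hd : rankIn A c + 1 ≤ d
      · rw [if_pos ⟨h, mem_Icc.2 ⟨by omega, hd⟩⟩, card_insert_of_notMem (by simp), ih]
        omega
      · rw [if_neg fun h' => hd (mem_Icc.1 h'.2).2, ih]
        omega
    · rw [if_neg h, if_neg fun h' => h h'.1, ih, add_zero]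

theorem sum_sum_choose_mul_choose_eq_sum_card {n j : ℕ} {S T : Finset ℕ} (hS : S ⊆ Icc 1 j)
    (hT : T ⊆ Icc 1 n) :
    ∑ s ∈ S, ∑ t ∈ T, (t - 1).choose (s - 1) * (n - t).choose (j - s) =
      ∑ A ∈ powersetCard j (Icc 1 n), #{t ∈ T | t ∈ A ∧ rankIn A t ∈ S} := by
  calc _ = ∑ s ∈ S, ∑ t ∈ T, ∑ A ∈ powersetCard j (Icc 1 n),
          if t ∈ A ∧ rankIn A t = s then 1 else 0 := by
        refine sum_congr rfl fun s hs => sum_congr rfl fun t ht => ?_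
        have := mem_Icc.1 (hS hs)
        have := mem_Icc.1 (hT ht)
        rw [← card_filter_rankIn_eq (by omega) (by omega) (by omega) (by omega), card_filter]
    _ = ∑ A ∈ powersetCard j (Icc 1 n), ∑ t ∈ T, ∑ s ∈ S,
          if t ∈ A ∧ rankIn A t = s then 1 else 0 := by
        rw [sum_comm]
        simp_rw [sum_comm (s := S)]
        rw [sum_comm]
    _ = _ := by
        refine sum_congr rfl fun A _ => ?_
        rw [card_filter]
        refine sum_congr rfl fun t _ => ?_
        by_cases htA : t ∈ A <;> simp [htA]

theorem sum_sum_choose_mul_choose_le_Icc {n j : ℕ} {S T : Finset ℕ} (hS : S ⊆ Icc 1 j)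
    (hT : T ⊆ Icc 1 n) :
    ∑ s ∈ S, ∑ t ∈ T, (t - 1).choose (s - 1) * (n - t).choose (j - s) ≤
      ∑ s ∈ Icc 1 #S, ∑ t ∈ Icc 1 #T, (t - 1).choose (s - 1) * (n - t).choose (j - s) := by
  have hS' : Icc 1 #S ⊆ Icc 1 j := Icc_subset_Icc_right (by simpa using card_le_card hS)
  have hT' : Icc 1 #T ⊆ Icc 1 n := Icc_subset_Icc_right (by simpa using card_le_card hT)
  rw [sum_sum_choose_mul_choose_eq_sum_card hS hT, sum_sum_choose_mul_choose_eq_sum_card hS' hT']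
  calc _ ≤ ∑ A ∈ powersetCard j (Icc 1 n), min #S #(A ∩ T) :=
        sum_le_sum fun A _ => card_filter_rankIn_mem_le A S T fun t ht => (mem_Icc.1 (hT ht)).1
    _ = ∑ A ∈ powersetCard j (Icc 1 n), min #S #(A ∩ Icc 1 #T) := by
        rw [sum_powersetCard_comp_card_inter hT, sum_powersetCard_comp_card_inter hT',
          Nat.card_Icc 1 #T, add_tsub_cancel_right]
    _ = _ := sum_congr rfl fun A _ => (card_filter_rankIn_mem_Icc A #T #S).symm

theorem intChoose_natCast_s11 (a b : ℕ) : intChoose a b = a.choose b := by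
  unfold intChoose
  split_ifs with h
  · simp
  · rw [Nat.choose_eq_zero_of_lt (by omega)]

theorem intChoose_mul_intChoose_eq_choose_mul_choose {n j : ℕ} {x y : ℤ} (hx : 1 ≤ x)
    (hxn : x ≤ n) (hy : 1 ≤ y) (hyj : y ≤ j) :
    intChoose (x - 1) (y - 1) * intChoose (n - x) (j - y) =
      (x.toNat - 1).choose (y.toNat - 1) * (n - x.toNat).choose (j - y.toNat) := by
  lift x to ℕ using (by omega)
  lift y to ℕ using (by omega)
  simp only [Int.toNat_natCast]
  rw [← intChoose_natCast_s11, ← intChoose_natCast_s11]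
  push_cast [show 1 ≤ x by omega, show 1 ≤ y by omega, show x ≤ n by omega, show y ≤ j by omega]
  rfl

theorem strictMonoOn_toNat_comp {u : ℕ → ℤ} {m : ℕ}
    (hmono : ∀ a b, 1 ≤ a → a < b → b ≤ m → u a < u b) (hpos : ∀ a, 1 ≤ a → a ≤ m → 0 ≤ u a) :
    StrictMonoOn (fun a => (u a).toNat) (Icc 1 m) := by
  intro a ha b hb hab
  rw [mem_coe, mem_Icc] at ha hb
  have := hmono a b ha.1 hab hb.2
  have := hpos a ha.1 ha.2
  simp only
  omega

theorem double_sum_choose_le_general (n j c d : ℕ) (t s : ℕ → ℤ)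
    (hdj : d ≤ j) (hcn : c ≤ n)
    (ht_mono : ∀ l1 l2, 1 ≤ l1 → l1 < l2 → l2 ≤ c → t l1 < t l2)
    (ht_bdd : ∀ l, 1 ≤ l → l ≤ c → 1 ≤ t l ∧ t l ≤ (n : ℤ))
    (hs_mono : ∀ i1 i2, 1 ≤ i1 → i1 < i2 → i2 ≤ d → s i1 < s i2)
    (hs_bdd : ∀ i, 1 ≤ i → i ≤ d → 1 ≤ s i ∧ s i ≤ (j : ℤ)) :
    ∑ i ∈ Finset.Icc 1 d, ∑ l ∈ Finset.Icc 1 c,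
        intChoose (t l - 1) (s i - 1) * intChoose ((n : ℤ) - t l) ((j : ℤ) - s i) ≤
      ∑ i ∈ Finset.Icc 1 d, ∑ l ∈ Finset.Icc 1 c,
        intChoose ((l : ℤ) - 1) ((i : ℤ) - 1) * intChoose ((n : ℤ) - (l : ℤ)) ((j : ℤ) - (i : ℤ)) := by
  have ht := strictMonoOn_toNat_comp ht_mono fun l h1 h2 => by linarith [ht_bdd l h1 h2]
  have hs := strictMonoOn_toNat_comp hs_mono fun i h1 h2 => by linarith [hs_bdd i h1 h2]
  have hT : (Icc 1 c).image (fun l => (t l).toNat) ⊆ Icc 1 n := by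
    simp only [image_subset_iff, mem_Icc]
    exact fun l hl => by have := ht_bdd l hl.1 hl.2; omega
  have hS : (Icc 1 d).image (fun i => (s i).toNat) ⊆ Icc 1 j := by
    simp only [image_subset_iff, mem_Icc]
    exact fun i hi => by have := hs_bdd i hi.1 hi.2; omega
  have key := sum_sum_choose_mul_choose_le_Icc hS hT
  rw [card_image_of_injOn hs.injOn, card_image_of_injOn ht.injOn, Nat.card_Icc, Nat.card_Icc,
    add_tsub_cancel_right, add_tsub_cancel_right, sum_image hs.injOn] at key
  simp only [sum_image ht.injOn] at key
  convert key using 1 <;> refine sum_congr rfl fun i hi => sum_congr rfl fun l hl => ?_ <;>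
    rw [mem_Icc] at hi hl
  · exact intChoose_mul_intChoose_eq_choose_mul_choose (ht_bdd l hl.1 hl.2).1
      (ht_bdd l hl.1 hl.2).2 (hs_bdd i hi.1 hi.2).1 (hs_bdd i hi.1 hi.2).2
  · simpa using intChoose_mul_intChoose_eq_choose_mul_choose (n := n) (j := j) (x := l) (y := i)
      (by omega) (by omega) (by omega) (by omega)

theorem double_sum_choose_le (n j c d : ℕ) (t s : ℕ → ℤ)
    (hd : 1 ≤ d) (hdj : d ≤ j) (hjn : j ≤ n) (hc : 1 ≤ c) (hcn : c ≤ n)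
    (ht_mono : ∀ l1 l2, 1 ≤ l1 → l1 < l2 → l2 ≤ c → t l1 < t l2)
    (ht_bdd : ∀ l, 1 ≤ l → l ≤ c → 1 ≤ t l ∧ t l ≤ (n : ℤ))
    (hs_mono : ∀ i1 i2, 1 ≤ i1 → i1 < i2 → i2 ≤ d → s i1 < s i2)
    (hs_bdd : ∀ i, 1 ≤ i → i ≤ d → 1 ≤ s i ∧ s i ≤ (j : ℤ)) :
    ∑ i ∈ Finset.Icc 1 d, ∑ l ∈ Finset.Icc 1 c,
        intChoose (t l - 1) (s i - 1) * intChoose ((n : ℤ) - t l) ((j : ℤ) - s i) ≤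
      ∑ i ∈ Finset.Icc 1 d, ∑ l ∈ Finset.Icc 1 c,
        intChoose ((l : ℤ) - 1) ((i : ℤ) - 1) * intChoose ((n : ℤ) - (l : ℤ)) ((j : ℤ) - (i : ℤ)) :=
  double_sum_choose_le_general n j c d t s hdj hcn ht_mono ht_bdd hs_mono hs_bdd
end

section
/- For 1 ≤ k ≤ n, p(k, n) ≥ p(k, n+1); that is, the maximum probability of selecting the k-th best candidate is non-increasing in the total number n of candidates. -/
open Finset
open scoped Classical

/-- Absolute rank (1-based) of the `j`-th candidate when the arrival order is
given by the permutation `σ` : the `j`-th candidate interviewed has rank `σ j + 1`. -/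
def absRank {n : ℕ} (σ : Equiv.Perm (Fin n)) (j : Fin n) : ℕ := (σ j : ℕ) + 1

/-- Relative rank (1-based) of the `j`-th candidate among the first `j` candidates. -/
def relRank {n : ℕ} (σ : Equiv.Perm (Fin n)) (j : Fin n) : ℕ :=
  (Finset.univ.filter fun i : Fin n => i ≤ j ∧ σ i ≤ σ j).card

/-- A stopping rule adapted to the sequence of relative ranks: the decision to stop at
stage `τ σ` depends only on the relative ranks observed up to that stage. -/
def IsStoppingRule {n : ℕ} (τ : Equiv.Perm (Fin n) → Fin n) : Prop :=
  ∀ σ σ' : Equiv.Perm (Fin n), (∀ i, i ≤ τ σ → relRank σ i = relRank σ' i) → τ σ' = τ σ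

/-- The probability (w.r.t. the uniform distribution on arrival orders) that the
stopping rule `τ` selects a candidate whose absolute rank lies in `Γ`. -/
noncomputable def selectProb (n : ℕ) (Γ : Finset ℕ) (τ : Equiv.Perm (Fin n) → Fin n) : ℝ :=
  ((Finset.univ.filter fun σ : Equiv.Perm (Fin n) => absRank σ (τ σ) ∈ Γ).card : ℝ) /
    (Nat.factorial n : ℝ)

/-- `p(Γ, n)`: the maximal probability of selecting a candidate with absolute rank in `Γ`. -/
noncomputable def pSet (n : ℕ) (Γ : Finset ℕ) : ℝ :=
  sSup {x : ℝ | ∃ τ : Equiv.Perm (Fin n) → Fin n, IsStoppingRule τ ∧ x = selectProb n Γ τ}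

/-- `p(k, n)`: the maximal probability of selecting the `k`-th best of `n` candidates. -/
noncomputable def pRank (n k : ℕ) : ℝ := pSet n {k}

/-! ### Auxiliary material -/

namespace Secretary

/-- Insert a new, worst candidate (rank `n+1`) at arrival position `i`. -/
noncomputable def extPerm {n : ℕ} (i : Fin (n + 1)) (σ : Equiv.Perm (Fin n)) :
    Equiv.Perm (Fin (n + 1)) :=
  (finSuccEquiv' i).trans ((σ.optionCongr).trans (finSuccEquiv' (Fin.last n)).symm)

@[simp] lemma extPerm_self {n : ℕ} (i : Fin (n + 1)) (σ : Equiv.Perm (Fin n)) :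
    extPerm i σ i = Fin.last n := by
  simp [extPerm]

@[simp] lemma extPerm_succAbove {n : ℕ} (i : Fin (n + 1)) (σ : Equiv.Perm (Fin n)) (j : Fin n) :
    extPerm i σ (i.succAbove j) = (σ j).castSucc := by
  simp [extPerm, Fin.succAbove_last_apply]

lemma absRank_extPerm {n : ℕ} (i : Fin (n + 1)) (σ : Equiv.Perm (Fin n)) (j : Fin n) :
    absRank (extPerm i σ) (i.succAbove j) = absRank σ j := by
  simp [absRank]

lemma relRank_extPerm_succAbove {n : ℕ} (i : Fin (n + 1)) (σ : Equiv.Perm (Fin n)) (j : Fin n) :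
    relRank (extPerm i σ) (i.succAbove j) = relRank σ j := by
  unfold relRank
  refine (Finset.card_bij (fun m _ => i.succAbove m) ?_ ?_ ?_).symm
  · intro m hm
    simp only [mem_filter, mem_univ, true_and] at hm ⊢
    rw [extPerm_succAbove, extPerm_succAbove, Fin.succAbove_le_succAbove_iff,
      Fin.castSucc_le_castSucc_iff]
    exact hm
  · intro a _ b _ h
    exact (Fin.strictMono_succAbove i).injective h
  · intro b hb
    simp only [mem_filter, mem_univ, true_and] at hb
    have hbi : b ≠ i := by
      intro h
      rw [h, extPerm_self, extPerm_succAbove] at hb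
      exact absurd hb.2 (Fin.castSucc_lt_last (σ j)).not_ge
    obtain ⟨m, rfl⟩ := Fin.exists_succAbove_eq hbi
    refine ⟨m, ?_, rfl⟩
    rw [extPerm_succAbove, extPerm_succAbove, Fin.succAbove_le_succAbove_iff,
      Fin.castSucc_le_castSucc_iff] at hb
    simp only [mem_filter, mem_univ, true_and]
    exact hb

lemma relRank_extPerm_self {n : ℕ} (i : Fin (n + 1)) (σ : Equiv.Perm (Fin n)) :
    relRank (extPerm i σ) i = (i : ℕ) + 1 := by
  unfold relRank
  have h : (Finset.univ.filter fun w : Fin (n + 1) =>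
      w ≤ i ∧ extPerm i σ w ≤ extPerm i σ i) = Finset.Iic i := by
    ext w
    simp [extPerm_self, Fin.le_last]
  rw [h, Fin.card_Iic]

lemma extPerm_injective {n : ℕ} : Function.Injective
    (fun p : Fin (n + 1) × Equiv.Perm (Fin n) => extPerm p.1 p.2) := by
  rintro ⟨i, σ⟩ ⟨i', σ'⟩ h
  simp only at h
  have hval : ∀ x, extPerm i σ x = extPerm i' σ' x := fun x => by rw [h]
  have hi : i = i' := by
    by_contra hne
    obtain ⟨j, hj⟩ := Fin.exists_succAbove_eq hne
    have h2 := hval i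
    rw [extPerm_self, ← hj, extPerm_succAbove] at h2
    exact absurd h2.symm (Fin.castSucc_lt_last (σ' j)).ne
  subst hi
  have hσ : σ = σ' := by
    apply Equiv.ext
    intro j
    have h2 := hval (i.succAbove j)
    rw [extPerm_succAbove, extPerm_succAbove] at h2
    exact Fin.castSucc_injective _ h2
  rw [hσ]

lemma extPerm_bijective {n : ℕ} : Function.Bijective
    (fun p : Fin (n + 1) × Equiv.Perm (Fin n) => extPerm p.1 p.2) := by
  rw [Fintype.bijective_iff_injective_and_card]
  refine ⟨extPerm_injective, ?_⟩
  simp [Fintype.card_perm, Nat.factorial_succ]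

/-- The stopping rule on `n` candidates induced by a rule `τ` on `n+1` candidates and an
insertion position `i`. -/
noncomputable def shrink {n : ℕ} (hn : 0 < n) (τ : Equiv.Perm (Fin (n + 1)) → Fin (n + 1))
    (i : Fin (n + 1)) (σ : Equiv.Perm (Fin n)) : Fin n :=
  if h : τ (extPerm i σ) = i then ⟨min i (n - 1), by omega⟩
  else Classical.choose (Fin.exists_succAbove_eq h)

lemma shrink_spec {n : ℕ} (hn : 0 < n) {τ : Equiv.Perm (Fin (n + 1)) → Fin (n + 1)}
    {i : Fin (n + 1)} {σ : Equiv.Perm (Fin n)} (h : τ (extPerm i σ) ≠ i) :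
    i.succAbove (shrink hn τ i σ) = τ (extPerm i σ) := by
  rw [shrink, dif_neg h]
  exact Classical.choose_spec (Fin.exists_succAbove_eq h)

lemma val_le_succAbove {n : ℕ} (i : Fin (n + 1)) (j : Fin n) :
    (j : ℕ) ≤ (i.succAbove j : ℕ) := by
  rw [Fin.succAbove]
  split <;> simp

lemma shrink_isStoppingRule {n : ℕ} (hn : 0 < n) {τ : Equiv.Perm (Fin (n + 1)) → Fin (n + 1)}
    (hτ : IsStoppingRule τ) (i : Fin (n + 1)) : IsStoppingRule (shrink hn τ i) := by
  intro σ σ' hrel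
  have key : ∀ u : Fin (n + 1), u ≤ τ (extPerm i σ) →
      relRank (extPerm i σ) u = relRank (extPerm i σ') u := by
    intro u hu
    rcases eq_or_ne u i with rfl | hui
    · rw [relRank_extPerm_self, relRank_extPerm_self]
    · obtain ⟨j, rfl⟩ := Fin.exists_succAbove_eq hui
      rw [relRank_extPerm_succAbove, relRank_extPerm_succAbove]
      apply hrel
      by_cases h : τ (extPerm i σ) = i
      · have hlt : (i.succAbove j : ℕ) < (i : ℕ) := by
          rw [h] at hu
          exact lt_of_le_of_ne hu (fun he => hui (Fin.val_injective he))
        have hj : (j : ℕ) < (i : ℕ) := lt_of_le_of_lt (val_le_succAbove i j) hlt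
        rw [shrink, dif_pos h, Fin.le_def]
        have hjn : (j : ℕ) < n := j.isLt
        simp only
        omega
      · have hs := shrink_spec hn h
        rw [← hs] at hu
        exact Fin.succAbove_le_succAbove_iff.mp hu
  have heq : τ (extPerm i σ') = τ (extPerm i σ) := hτ _ _ key
  by_cases h : τ (extPerm i σ) = i
  · rw [shrink, shrink, dif_pos h, dif_pos (heq.trans h)]
  · have h' : τ (extPerm i σ') ≠ i := fun hh => h (heq.symm.trans hh)
    apply (Fin.strictMono_succAbove i).injective
    rw [shrink_spec hn h', shrink_spec hn h, heq]

lemma bddAbove_probSet (n : ℕ) (Γ : Finset ℕ) :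
    BddAbove {x : ℝ | ∃ τ : Equiv.Perm (Fin n) → Fin n,
      IsStoppingRule τ ∧ x = selectProb n Γ τ} := by
  refine ⟨1, ?_⟩
  rintro x ⟨τ, -, rfl⟩
  unfold selectProb
  apply div_le_one_of_le₀
  · have hc : (Finset.univ.filter fun σ : Equiv.Perm (Fin n) =>
        absRank σ (τ σ) ∈ Γ).card ≤ Fintype.card (Equiv.Perm (Fin n)) := by
      simpa using Finset.card_filter_le Finset.univ _
    rw [Fintype.card_perm, Fintype.card_fin] at hc
    exact_mod_cast hc
  · positivity

lemma selectProb_le_pSet {n k : ℕ} (hn : 0 < n) (hkn : k ≤ n)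
    {τ : Equiv.Perm (Fin (n + 1)) → Fin (n + 1)} (hτ : IsStoppingRule τ) :
    selectProb (n + 1) {k} τ ≤ pSet n {k} := by
  set N : ℕ := (Finset.univ.filter fun π : Equiv.Perm (Fin (n + 1)) =>
    absRank π (τ π) ∈ ({k} : Finset ℕ)).card with hN
  set Ni : Fin (n + 1) → ℕ := fun i => (Finset.univ.filter fun σ : Equiv.Perm (Fin n) =>
    absRank σ (shrink hn τ i σ) ∈ ({k} : Finset ℕ)).card with hNi
  -- each shrink rule's probability is at most pSet n {k}
  have hb : ∀ i, (Ni i : ℝ) / (Nat.factorial n : ℝ) ≤ pSet n {k} := by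
    intro i
    exact le_csSup (bddAbove_probSet n {k})
      ⟨shrink hn τ i, shrink_isStoppingRule hn hτ i, rfl⟩
  -- N ≤ ∑ i, Ni i
  have hsum : N ≤ ∑ i : Fin (n + 1), Ni i := by
    have h1 : N = ∑ p : Fin (n + 1) × Equiv.Perm (Fin n),
        (if absRank (extPerm p.1 p.2) (τ (extPerm p.1 p.2)) ∈ ({k} : Finset ℕ) then 1 else 0) := by
      rw [hN, Finset.card_filter]
      exact (Fintype.sum_bijective _ extPerm_bijective _ _ (fun p => rfl)).symm
    have h2 : ∀ p : Fin (n + 1) × Equiv.Perm (Fin n),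
        (if absRank (extPerm p.1 p.2) (τ (extPerm p.1 p.2)) ∈ ({k} : Finset ℕ) then 1 else 0) ≤
        (if absRank p.2 (shrink hn τ p.1 p.2) ∈ ({k} : Finset ℕ) then 1 else 0) := by
      rintro ⟨i, σ⟩
      by_cases h : τ (extPerm i σ) = i
      · have hne : absRank (extPerm i σ) (τ (extPerm i σ)) ∉ ({k} : Finset ℕ) := by
          rw [h]
          simp only [Finset.mem_singleton, absRank, extPerm_self, Fin.val_last]
          omega
        simp [hne]
      · have he : absRank (extPerm i σ) (τ (extPerm i σ)) = absRank σ (shrink hn τ i σ) := by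
          rw [← shrink_spec hn h, absRank_extPerm]
        rw [he]
    calc N = _ := h1
      _ ≤ ∑ p : Fin (n + 1) × Equiv.Perm (Fin n),
          (if absRank p.2 (shrink hn τ p.1 p.2) ∈ ({k} : Finset ℕ) then 1 else 0) :=
        Finset.sum_le_sum fun p _ => h2 p
      _ = ∑ i : Fin (n + 1), Ni i := by
        rw [Fintype.sum_prod_type]
        refine Finset.sum_congr rfl fun i _ => ?_
        simp only [hNi, Finset.card_filter]
  -- turn into a real inequality
  have hfacpos : (0 : ℝ) < (Nat.factorial n : ℝ) := by positivity
  have hNile : ∀ i, (Ni i : ℝ) ≤ (Nat.factorial n : ℝ) * pSet n {k} := by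
    intro i
    have := hb i
    rw [div_le_iff₀ hfacpos] at this
    linarith
  have hNreal : (N : ℝ) ≤ (Nat.factorial (n + 1) : ℝ) * pSet n {k} := by
    calc (N : ℝ) ≤ (∑ i : Fin (n + 1), Ni i : ℕ) := by exact_mod_cast hsum
      _ = ∑ i : Fin (n + 1), (Ni i : ℝ) := by push_cast; ring
      _ ≤ ∑ _i : Fin (n + 1), (Nat.factorial n : ℝ) * pSet n {k} :=
        Finset.sum_le_sum fun i _ => hNile i
      _ = (n + 1) * ((Nat.factorial n : ℝ) * pSet n {k}) := by
        rw [Finset.sum_const, Finset.card_univ, Fintype.card_fin]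
        push_cast
        ring
      _ = (Nat.factorial (n + 1) : ℝ) * pSet n {k} := by
        rw [Nat.factorial_succ]
        push_cast
        ring
  have hfacpos' : (0 : ℝ) < (Nat.factorial (n + 1) : ℝ) := by positivity
  rw [selectProb, ← hN, div_le_iff₀ hfacpos']
  linarith

end Secretary

theorem pRank_antitone_in_n (n k : ℕ) (hk1 : 1 ≤ k) (hkn : k ≤ n) :
    pRank n k ≥ pRank (n + 1) k := by
  have hn : 0 < n := by omega
  rw [ge_iff_le, pRank, pRank, pSet]
  apply csSup_le
  · exact ⟨selectProb (n + 1) {k} (fun _ => 0),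
      fun _ => (0 : Fin (n + 1)), fun σ σ' _ => rfl, rfl⟩
  · rintro x ⟨τ, hτ, rfl⟩
    exact Secretary.selectProb_le_pSet hn hkn hτ
end

section
/- For 1 ≤ k ≤ n, p(k, n) = p(n - k + 1, n), and consequently p(k, n) ≥ p(k+1, n+1). -/
open Finset
open scoped Classical

/-!
Turning the ranking upside down (`σ ↦ rev ∘ σ`) changes the relative rank `r` of the
`j`-th arrival into `j + 2 - r`, so it maps stopping rules to stopping rules and
absolute rank `k` to `n + 1 - k`; hence `p(k, n) = p(n - k + 1, n)`.

For `k ≤ n`, `p(k, n + 1) ≤ p(k, n)`: a rule for `n + 1` candidates is run on `n` real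
candidates with a fictitious worst candidate inserted at stage `m`. Every arrival order of
`n + 1` candidates arises from exactly one pair `(m, σ)`, and stopping at the fictitious
candidate never selects rank `k`, so the success probability of the original rule is an
average over `m` of success probabilities of rules for `n` candidates. Then
`p(k + 1, n + 1) = p(n - k + 1, n + 1) ≤ p(n - k + 1, n) = p(k, n)`.
-/

open Equiv

section Supremum

variable {n : ℕ} {Γ : Finset ℕ}

lemma selectProb_mul_factorial (τ : Perm (Fin n) → Fin n) :
    selectProb n Γ τ * n.factorial = #{σ | absRank σ (τ σ) ∈ Γ} :=
  div_mul_cancel₀ _ (by positivity)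

lemma selectProb_nonneg (τ : Perm (Fin n) → Fin n) : 0 ≤ selectProb n Γ τ := by
  unfold selectProb
  positivity

lemma selectProb_le_one (τ : Perm (Fin n) → Fin n) : selectProb n Γ τ ≤ 1 := by
  rw [selectProb, div_le_one (by positivity)]
  exact_mod_cast (card_filter_le _ _).trans_eq (by simp [Fintype.card_perm])

lemma selectProb_le_pSet {τ : Perm (Fin n) → Fin n} (hτ : IsStoppingRule τ) :
    selectProb n Γ τ ≤ pSet n Γ :=
  le_csSup ⟨1, by rintro _ ⟨τ, -, rfl⟩; exact selectProb_le_one τ⟩ ⟨τ, hτ, rfl⟩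

lemma pSet_nonneg : 0 ≤ pSet n Γ :=
  Real.sSup_nonneg (by rintro _ ⟨τ, -, rfl⟩; exact selectProb_nonneg τ)

lemma pSet_le_of_forall {a : ℝ} (ha : 0 ≤ a)
    (h : ∀ τ : Perm (Fin n) → Fin n, IsStoppingRule τ → selectProb n Γ τ ≤ a) :
    pSet n Γ ≤ a :=
  Real.sSup_le (by rintro _ ⟨τ, hτ, rfl⟩; exact h τ hτ) ha

end Supremum

section Reversal

variable {n : ℕ}

lemma absRank_le (σ : Perm (Fin n)) (j : Fin n) : absRank σ j ≤ n :=
  (σ j).isLt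

def reverseRanks (σ : Perm (Fin n)) : Perm (Fin n) := σ.trans Fin.revPerm

lemma reverseRanks_involutive : Function.Involutive (reverseRanks (n := n)) := fun σ => by
  ext i
  simp [reverseRanks]

lemma absRank_reverseRanks (σ : Perm (Fin n)) (j : Fin n) :
    absRank (reverseRanks σ) j = n + 1 - absRank σ j := by
  have := absRank_le σ j
  simp only [absRank, reverseRanks, trans_apply, Fin.revPerm_apply, Fin.val_rev] at this ⊢
  omega

lemma relRank_reverseRanks_add_relRank (σ : Perm (Fin n)) (j : Fin n) :
    relRank (reverseRanks σ) j + relRank σ j = j + 2 := by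
  set A : Finset (Fin n) := {i | i ≤ j ∧ reverseRanks σ i ≤ reverseRanks σ j}
  set B : Finset (Fin n) := {i | i ≤ j ∧ σ i ≤ σ j}
  have hunion : A ∪ B = Iic j := by
    ext i
    simp only [A, B, reverseRanks, mem_union, mem_filter_univ, trans_apply, Fin.revPerm_apply,
      Fin.rev_le_rev, mem_Iic]
    have := le_total (σ i) (σ j)
    tauto
  have hinter : A ∩ B = {j} := by
    ext i
    simp only [A, B, reverseRanks, mem_inter, mem_filter_univ, trans_apply, Fin.revPerm_apply,
      Fin.rev_le_rev, mem_singleton]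
    constructor
    · rintro ⟨⟨-, h₁⟩, -, h₂⟩
      exact σ.injective (le_antisymm h₂ h₁)
    · rintro rfl
      simp
  have := card_union_add_card_inter A B
  rw [hunion, hinter, Fin.card_Iic, card_singleton] at this
  exact this.symm

lemma IsStoppingRule.comp_reverseRanks {τ : Perm (Fin n) → Fin n} (hτ : IsStoppingRule τ) :
    IsStoppingRule (τ ∘ reverseRanks) := fun σ σ' hag =>
  hτ _ _ fun i hi => by
    have := relRank_reverseRanks_add_relRank σ i
    have := relRank_reverseRanks_add_relRank σ' i
    have := hag i hi
    omega

lemma selectProb_comp_reverseRanks {k : ℕ} (hk : k ≤ n) (τ : Perm (Fin n) → Fin n) :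
    selectProb n {k} (τ ∘ reverseRanks) = selectProb n {n - k + 1} τ := by
  unfold selectProb
  congr 2
  refine card_equiv reverseRanks_involutive.toPerm fun σ => ?_
  have hσ := absRank_reverseRanks (reverseRanks σ) (τ (reverseRanks σ))
  have := absRank_le (reverseRanks σ) (τ (reverseRanks σ))
  rw [reverseRanks_involutive σ] at hσ
  simp only [mem_filter_univ, mem_singleton, Function.comp_apply,
    Function.Involutive.coe_toPerm, absRank] at hσ this ⊢
  omega

lemma pRank_le_pRank_sub_add_one {k : ℕ} (hk : k ≤ n) : pRank n k ≤ pRank n (n - k + 1) :=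
  pSet_le_of_forall pSet_nonneg fun τ hτ => by
    have hτ' : τ = (τ ∘ reverseRanks) ∘ reverseRanks := by
      rw [Function.comp_assoc, reverseRanks_involutive.comp_self, Function.comp_id]
    rw [hτ', selectProb_comp_reverseRanks hk]
    exact selectProb_le_pSet hτ.comp_reverseRanks

lemma pRank_eq_pRank_sub_add_one {k : ℕ} (hk₁ : 1 ≤ k) (hkn : k ≤ n) :
    pRank n k = pRank n (n - k + 1) := by
  refine (pRank_le_pRank_sub_add_one hkn).antisymm ?_
  have := pRank_le_pRank_sub_add_one (show n - k + 1 ≤ n by omega)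
  rwa [show n - (n - k + 1) + 1 = k by omega] at this

end Reversal

section Insertion

variable {n : ℕ}

def insertWorst (m : Fin (n + 1)) (σ : Perm (Fin n)) : Perm (Fin (n + 1)) :=
  ((finSuccEquiv' m).trans (optionCongr σ)).trans (finSuccEquiv' (Fin.last n)).symm

@[simp]
lemma insertWorst_self (m : Fin (n + 1)) (σ : Perm (Fin n)) :
    insertWorst m σ m = Fin.last n := by
  simp [insertWorst]

@[simp]
lemma insertWorst_succAbove (m : Fin (n + 1)) (σ : Perm (Fin n)) (j : Fin n) :
    insertWorst m σ (m.succAbove j) = (σ j).castSucc := by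
  simp [insertWorst, finSuccEquiv'_symm_some, Fin.succAbove_last]

lemma absRank_insertWorst_self (m : Fin (n + 1)) (σ : Perm (Fin n)) :
    absRank (insertWorst m σ) m = n + 1 := by
  simp [absRank]

lemma absRank_insertWorst_succAbove (m : Fin (n + 1)) (σ : Perm (Fin n)) (j : Fin n) :
    absRank (insertWorst m σ) (m.succAbove j) = absRank σ j := by
  simp [absRank]

lemma relRank_insertWorst_self (m : Fin (n + 1)) (σ : Perm (Fin n)) :
    relRank (insertWorst m σ) m = m + 1 := by
  rw [relRank, ← Fin.card_Iic]
  congr 1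
  ext i
  simp [Fin.le_last]

lemma relRank_insertWorst_succAbove (m : Fin (n + 1)) (σ : Perm (Fin n)) (j : Fin n) :
    relRank (insertWorst m σ) (m.succAbove j) = relRank σ j := by
  rw [relRank, relRank, card_filter, card_filter, Fin.sum_univ_succAbove _ m]
  simp [Fin.succAbove_le_succAbove_iff]

lemma insertWorst_injective :
    Function.Injective fun p : Fin (n + 1) × Perm (Fin n) => insertWorst p.1 p.2 := by
  rintro ⟨m, σ⟩ ⟨m', σ'⟩ h
  simp only at h
  have hm : m = m' := by
    by_contra hne
    obtain ⟨j, rfl⟩ := Fin.exists_succAbove_eq hne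
    have := insertWorst_self (m'.succAbove j) σ
    rw [h, insertWorst_succAbove] at this
    exact (Fin.castSucc_lt_last _).ne this
  subst hm
  obtain rfl : σ = σ' := Equiv.ext fun j => Fin.castSucc_injective _ <| by
    rw [← insertWorst_succAbove m, h, insertWorst_succAbove]
  rfl

noncomputable def insertWorstEquiv : Fin (n + 1) × Perm (Fin n) ≃ Perm (Fin (n + 1)) :=
  Equiv.ofBijective _ <| (Fintype.bijective_iff_injective_and_card _).2
    ⟨insertWorst_injective, by simp [Fintype.card_perm, Nat.factorial_succ]⟩

lemma card_filter_eq_sum_insertWorst (P : Perm (Fin (n + 1)) → Prop) [DecidablePred P] :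
    #{ρ | P ρ} = ∑ m, #{σ | P (insertWorst m σ)} := by
  rw [card_equiv insertWorstEquiv.symm (t := {p | P (insertWorst p.1 p.2)}) fun ρ => by
    simp only [mem_filter_univ]
    exact iff_of_eq (congrArg P (insertWorstEquiv.apply_symm_apply ρ).symm)]
  simp only [card_filter, Fintype.sum_prod_type]

end Insertion

section Restriction

variable {n : ℕ}

/-- Runs `τ` with a fictitious worst candidate inserted at stage `m`; if `τ` stops at it,
waits for the last real candidate instead. -/
def restrictRule (τ : Perm (Fin (n + 2)) → Fin (n + 2)) (m : Fin (n + 2))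
    (σ : Perm (Fin (n + 1))) : Fin (n + 1) :=
  (finSuccEquiv' m (τ (insertWorst m σ))).getD (Fin.last n)

variable {τ : Perm (Fin (n + 2)) → Fin (n + 2)} {m : Fin (n + 2)} {σ : Perm (Fin (n + 1))}

lemma restrictRule_of_eq (h : τ (insertWorst m σ) = m) : restrictRule τ m σ = Fin.last n := by
  simp [restrictRule, h]

lemma restrictRule_of_eq_succAbove {j : Fin (n + 1)} (h : τ (insertWorst m σ) = m.succAbove j) :
    restrictRule τ m σ = j := by
  simp [restrictRule, h]

lemma IsStoppingRule.restrictRule (hτ : IsStoppingRule τ) (m : Fin (n + 2)) :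
    IsStoppingRule (restrictRule τ m) := by
  intro σ σ' hag
  have hτσ : τ (insertWorst m σ') = τ (insertWorst m σ) := by
    refine hτ _ _ fun s hs => ?_
    rcases eq_or_ne s m with rfl | hne
    · rw [relRank_insertWorst_self, relRank_insertWorst_self]
    obtain ⟨j, rfl⟩ := Fin.exists_succAbove_eq hne
    rw [relRank_insertWorst_succAbove, relRank_insertWorst_succAbove]
    refine hag j ?_
    rcases eq_or_ne (τ (insertWorst m σ)) m with hstop | hstop
    · exact (restrictRule_of_eq hstop).symm ▸ Fin.le_last j
    · obtain ⟨j₀, hj₀⟩ := Fin.exists_succAbove_eq hstop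
      rw [restrictRule_of_eq_succAbove hj₀.symm]
      exact Fin.succAbove_le_succAbove_iff.1 (hj₀ ▸ hs)
  simp only [_root_.restrictRule, hτσ]

lemma absRank_restrictRule_mem {Γ : Finset ℕ} (hΓ : n + 2 ∉ Γ)
    (h : absRank (insertWorst m σ) (τ (insertWorst m σ)) ∈ Γ) :
    absRank σ (restrictRule τ m σ) ∈ Γ := by
  rcases eq_or_ne (τ (insertWorst m σ)) m with hstop | hstop
  · rw [hstop, absRank_insertWorst_self] at h
    exact absurd h hΓ
  · obtain ⟨j, hj⟩ := Fin.exists_succAbove_eq hstop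
    rwa [restrictRule_of_eq_succAbove hj.symm, ← absRank_insertWorst_succAbove m, hj]

end Restriction

lemma pSet_add_two_le {n : ℕ} {Γ : Finset ℕ} (hΓ : n + 2 ∉ Γ) :
    pSet (n + 2) Γ ≤ pSet (n + 1) Γ := by
  refine pSet_le_of_forall pSet_nonneg fun τ hτ => ?_
  have hrestrict (m : Fin (n + 2)) :
      (#{σ | absRank (insertWorst m σ) (τ (insertWorst m σ)) ∈ Γ} : ℝ) ≤
        pSet (n + 1) Γ * (n + 1).factorial :=
    calc (#{σ | absRank (insertWorst m σ) (τ (insertWorst m σ)) ∈ Γ} : ℝ)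
        ≤ #{σ | absRank σ (restrictRule τ m σ) ∈ Γ} := by
          exact_mod_cast card_le_card fun σ => by
            simpa only [mem_filter_univ] using absRank_restrictRule_mem hΓ
      _ = selectProb (n + 1) Γ (restrictRule τ m) * (n + 1).factorial :=
          (selectProb_mul_factorial _).symm
      _ ≤ pSet (n + 1) Γ * (n + 1).factorial := by
          gcongr
          exact selectProb_le_pSet (hτ.restrictRule m)
  refine le_of_mul_le_mul_right ?_ (by positivity : (0 : ℝ) < (n + 2).factorial)
  calc selectProb (n + 2) Γ τ * (n + 2).factorial
      = ∑ m, (#{σ | absRank (insertWorst m σ) (τ (insertWorst m σ)) ∈ Γ} : ℝ) := by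
        rw [selectProb_mul_factorial, card_filter_eq_sum_insertWorst, Nat.cast_sum]
    _ ≤ ∑ _m : Fin (n + 2), pSet (n + 1) Γ * (n + 1).factorial := sum_le_sum fun m _ => hrestrict m
    _ = pSet (n + 1) Γ * (n + 2).factorial := by
        rw [sum_const, card_univ, Fintype.card_fin, nsmul_eq_mul, Nat.factorial_succ (n + 1)]
        push_cast
        ring

theorem pRank_symm_and_diagonal (n k : ℕ) (hk1 : 1 ≤ k) (hkn : k ≤ n) :
    pRank n k = pRank n (n - k + 1) ∧ pRank n k ≥ pRank (n + 1) (k + 1) := by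
  refine ⟨pRank_eq_pRank_sub_add_one hk1 hkn, ?_⟩
  obtain ⟨n, rfl⟩ : ∃ n', n = n' + 1 := ⟨n - 1, by omega⟩
  calc pRank (n + 1 + 1) (k + 1) = pRank (n + 2) (n + 1 - k + 1) := by
        rw [pRank_eq_pRank_sub_add_one (by omega) (by omega)]
        congr 2
        omega
    _ ≤ pRank (n + 1) (n + 1 - k + 1) := pSet_add_two_le (by rw [mem_singleton]; omega)
    _ = pRank (n + 1) k := (pRank_eq_pRank_sub_add_one hk1 hkn).symm
end

section
/- For n ≥ 3 and 1 < k < n, p(1, n) = p(n, n) > p(k, n): the maximum probability of selecting the k-th best of n candidates is strictly largest when k = 1 or k = n. -/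
/-!
Encode an arrival order by its sequence of relative ranks; this is a bijection between
permutations and sequences `c` with `c t ∈ Fin (t + 1)`, so the relative ranks are independent
and uniform. A candidate's absolute rank is read off from its relative rank and the later
relative ranks: it goes up by one each time a later arrival has relative rank at most its
current rank. Hence the probability `stopProb d x` that a candidate of relative rank `x`, with
`d` arrivals still to come, is the `k`-th best satisfies a simple recursion, and backward
induction gives `p(k, n) = optProb n k n`, where `optProb (d + 1)` averages
`max (stopProb d x) (optProb d)` over the relative rank `x` of the next arrival.

For `k = 1` and `k = n` each `stopProb d` is concentrated on a single relative rank (the best,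
resp. the worst) with the same mass, so the two recursions coincide. For every `k` that mass is
the same, and `∑ₓ max aₓ v ≤ (m - 1) v + max (∑ₓ aₓ) v` bounds the recursion for `k` by the one
for `1`. For `1 < k < n` the bound is strict at `d = 1`, where the mass is split between the
relative ranks `k - 1` and `k`, and strictness propagates.
-/

open Finset
open scoped Classical

namespace Secretary

/-- An arrival order encoded by its relative ranks: `c t` is the 0-based rank of the `t`-th
candidate among the first `t + 1`. -/
abbrev Code (n : ℕ) := ∀ t : Fin n, Fin (t.val + 1)

variable {n : ℕ}

/-- The 1-based relative rank at stage `s`, with the junk value `0` for `s ≥ n`. -/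
def rankAt (c : Code n) (s : ℕ) : ℕ := if h : s < n then (c ⟨s, h⟩ : ℕ) + 1 else 0

lemma rankAt_le (c : Code n) (s : ℕ) : rankAt c s ≤ s + 1 := by
  unfold rankAt
  split_ifs with h
  · exact Nat.succ_le_succ (Nat.lt_succ_iff.1 (c ⟨s, h⟩).isLt)
  · exact Nat.zero_le _

def cylinder (t : ℕ) (c₀ : Code n) : Finset (Code n) :=
  {c | ∀ i : Fin n, (i : ℕ) < t → c i = c₀ i}

lemma mem_cylinder {t : ℕ} {c₀ c : Code n} :
    c ∈ cylinder t c₀ ↔ ∀ i : Fin n, (i : ℕ) < t → c i = c₀ i := by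
  simp [cylinder]

lemma mem_cylinder_comm {t : ℕ} {c₀ c : Code n} : c ∈ cylinder t c₀ ↔ c₀ ∈ cylinder t c := by
  simp only [mem_cylinder, eq_comm]

lemma self_mem_cylinder (t : ℕ) (c₀ : Code n) : c₀ ∈ cylinder t c₀ :=
  mem_cylinder.2 fun _ _ => rfl

lemma cylinder_zero (c₀ : Code n) : cylinder 0 c₀ = univ := by
  ext c
  simp [mem_cylinder]

lemma cylinder_of_le {t : ℕ} (h : n ≤ t) (c₀ : Code n) : cylinder t c₀ = {c₀} := by
  ext c
  rw [mem_cylinder, mem_singleton]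
  exact ⟨fun h' => funext fun i => h' i (i.isLt.trans_le h), fun hc _ _ => hc ▸ rfl⟩

lemma rankAt_eq_of_mem_cylinder {t : ℕ} (ht : t < n) {c₀ c : Code n}
    (hc : c ∈ cylinder (t + 1) c₀) : rankAt c t = rankAt c₀ t := by
  simp only [rankAt, dif_pos ht, mem_cylinder.1 hc ⟨t, ht⟩ (Nat.lt_succ_self t)]

lemma rankAt_update_self {t : ℕ} (ht : t < n) (c₀ : Code n) (y : Fin (t + 1)) :
    rankAt (Function.update c₀ ⟨t, ht⟩ y) t = y + 1 := by
  simp only [rankAt, dif_pos ht, Function.update_self]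

lemma filter_cylinder_eq {t : ℕ} (ht : t < n) (c₀ : Code n) (y : Fin (t + 1)) :
    {c ∈ cylinder t c₀ | c ⟨t, ht⟩ = y} = cylinder (t + 1) (Function.update c₀ ⟨t, ht⟩ y) := by
  ext c
  simp only [mem_filter, mem_cylinder]
  constructor
  · rintro ⟨hpre, hy⟩ i hi
    by_cases hit : i = ⟨t, ht⟩
    · subst hit
      rwa [Function.update_self]
    · rw [Function.update_of_ne hit]
      exact hpre i (lt_of_le_of_ne (Nat.lt_succ_iff.1 hi) fun h => hit (Fin.ext h))
  · intro h
    refine ⟨fun i hi => ?_, by simpa using h ⟨t, ht⟩ (Nat.lt_succ_self t)⟩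
    rw [h i (by omega), Function.update_of_ne fun h' => hi.ne (congrArg Fin.val h')]

lemma cylinder_succ_update_subset {t : ℕ} (ht : t < n) (c₀ : Code n) (y : Fin (t + 1)) :
    cylinder (t + 1) (Function.update c₀ ⟨t, ht⟩ y) ⊆ cylinder t c₀ :=
  filter_cylinder_eq ht c₀ y ▸ filter_subset _ _

lemma sum_cylinder_eq_sum_sum {M : Type*} [AddCommMonoid M] {t : ℕ} (ht : t < n)
    (c₀ : Code n) (f : Code n → M) :
    ∑ c ∈ cylinder t c₀, f c =
      ∑ y : Fin (t + 1), ∑ c ∈ cylinder (t + 1) (Function.update c₀ ⟨t, ht⟩ y), f c := by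
  rw [← sum_fiberwise_of_maps_to (g := fun c : Code n => c ⟨t, ht⟩) (t := univ)
    (fun _ _ => mem_univ _) f]
  exact sum_congr rfl fun y _ => by rw [filter_cylinder_eq ht c₀ y]

/-- `(t + 1) ⋯ n`, the number of codes in a cylinder of length `t`. -/
def numCompletions (n t : ℕ) : ℕ := ∏ i ∈ Ico t n, (i + 1)

lemma numCompletions_of_le {t : ℕ} (h : n ≤ t) : numCompletions n t = 1 := by
  rw [numCompletions, Ico_eq_empty (by omega), prod_empty]

lemma numCompletions_eq_mul {t : ℕ} (h : t < n) :
    numCompletions n t = (t + 1) * numCompletions n (t + 1) := by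
  rw [numCompletions, numCompletions, prod_eq_prod_Ico_succ_bot h]

lemma numCompletions_zero (n : ℕ) : numCompletions n 0 = n.factorial := by
  rw [numCompletions, ← range_eq_Ico, prod_range_add_one_eq_factorial]

/-- The rank of a candidate who has rank `r` among the first `t + 1` arrivals, once the
arrivals `t + 1, …, t + f`, of relative ranks `g (t + 1), …, g (t + f)`, have been seen. -/
def rankAfter (g : ℕ → ℕ) : ℕ → ℕ → ℕ → ℕ
  | 0, _, r => r
  | f + 1, t, r => rankAfter g f (t + 1) (if g (t + 1) ≤ r then r + 1 else r)

noncomputable def payoff (k : ℕ) (c : Code n) (j : ℕ) : ℝ :=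
  if rankAfter (rankAt c) (n - 1 - j) j (rankAt c j) = k then 1 else 0

/-- The probability that a candidate of relative rank `x`, followed by `d` more arrivals among
`n` candidates, has absolute rank `k`. -/
noncomputable def stopProb (n k : ℕ) : ℕ → ℕ → ℝ
  | 0, x => if x = k then 1 else 0
  | d + 1, x => (x * stopProb n k d (x + 1) + (n - d - x : ℕ) * stopProb n k d x) / (n - d : ℕ)

lemma sum_fin_ite_succ_le (m r : ℕ) (hr : r ≤ m) (A B : ℝ) :
    ∑ y : Fin m, (if (y : ℕ) + 1 ≤ r then A else B) = r * A + (m - r : ℕ) * B := by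
  rw [Fin.sum_univ_eq_sum_range (fun y => if y + 1 ≤ r then A else B) m, range_eq_Ico,
    ← sum_Ico_consecutive _ (Nat.zero_le r) hr,
    sum_congr rfl fun y hy => if_pos (by rw [mem_Ico] at hy; omega),
    sum_congr rfl fun y hy => if_neg (by rw [mem_Ico] at hy; omega)]
  simp

/-- Relative ranks after a fixed prefix are uniform and independent, so the completions of a
prefix realise the recursion defining `stopProb`. -/
theorem sum_cylinder_rankAfter (k : ℕ) :
    ∀ f t, t + f + 1 = n → ∀ r ≤ t + 1, ∀ c₀ : Code n,
      ∑ c ∈ cylinder (t + 1) c₀, (if rankAfter (rankAt c) f t r = k then (1 : ℝ) else 0) =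
        numCompletions n (t + 1) * stopProb n k f r := by
  intro f
  induction f with
  | zero =>
    intro t ht r _ c₀
    simp only [cylinder_of_le (show n ≤ t + 1 by omega), rankAfter, sum_singleton,
      numCompletions_of_le (show n ≤ t + 1 by omega), Nat.cast_one, stopProb, one_mul]
    congr
  | succ f ih =>
    intro t ht r hr c₀
    have ht1 : t + 1 < n := by omega
    have hfiber (y : Fin (t + 2)) :
        ∑ c ∈ cylinder (t + 2) (Function.update c₀ ⟨t + 1, ht1⟩ y),
            (if rankAfter (rankAt c) (f + 1) t r = k then (1 : ℝ) else 0) =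
          numCompletions n (t + 2) *
            (if (y : ℕ) + 1 ≤ r then stopProb n k f (r + 1) else stopProb n k f r) := by
      rw [← apply_ite (stopProb n k f), ← ih (t + 1) (by omega) _ (by split_ifs <;> omega)]
      refine sum_congr rfl fun c hc => ?_
      rw [rankAfter, rankAt_eq_of_mem_cylinder ht1 hc, rankAt_update_self]
    rw [sum_cylinder_eq_sum_sum ht1, sum_congr rfl fun y _ => hfiber y, ← mul_sum,
      sum_fin_ite_succ_le (t + 2) r (by omega), stopProb, numCompletions_eq_mul ht1,
      show n - f = t + 2 by omega]
    push_cast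
    field_simp
    ring

/-- The optimal probability of selecting the candidate of absolute rank `k` when the last `d`
of `n` candidates are still to come and one of them must be selected. -/
noncomputable def optProb (n k : ℕ) : ℕ → ℝ
  | 0 => 0
  | d + 1 => (∑ x ∈ Icc 1 (n - d), max (stopProb n k d x) (optProb n k d)) / (n - d : ℕ)

lemma stopProb_nonneg (n k d x : ℕ) : 0 ≤ stopProb n k d x := by
  induction d generalizing x with
  | zero => rw [stopProb]; positivity
  | succ d ih => have := ih x; have := ih (x + 1); rw [stopProb]; positivity

lemma optProb_nonneg (n k d : ℕ) : 0 ≤ optProb n k d := by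
  induction d with
  | zero => rw [optProb]
  | succ d ih =>
    rw [optProb]
    exact div_nonneg (sum_nonneg fun x _ => ih.trans (le_max_right _ _)) (Nat.cast_nonneg _)

lemma sum_Icc_one_eq_sum_range {M : Type*} [AddCommMonoid M] (m : ℕ) (g : ℕ → M) :
    ∑ x ∈ Icc 1 m, g x = ∑ x ∈ range m, g (x + 1) := by
  rw [range_eq_Ico, sum_Ico_add', zero_add, Ico_add_one_right_eq_Icc]

lemma numCompletions_mul_optProb_succ (k : ℕ) {t d : ℕ} (h : t + d + 1 = n) :
    numCompletions n t * optProb n k (d + 1) =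
      ∑ y : Fin (t + 1), numCompletions n (t + 1) *
        max (stopProb n k d ((y : ℕ) + 1)) (optProb n k d) := by
  rw [← mul_sum, Fin.sum_univ_eq_sum_range fun y => max (stopProb n k d (y + 1)) (optProb n k d),
    optProb, sum_Icc_one_eq_sum_range, show n - d = t + 1 by omega,
    numCompletions_eq_mul (show t < n by omega)]
  push_cast
  field_simp

lemma sum_payoff_cylinder (k : ℕ) {t : ℕ} (ht : t < n) (c₀ : Code n) :
    ∑ c ∈ cylinder (t + 1) c₀, payoff k c t =
      numCompletions n (t + 1) * stopProb n k (n - 1 - t) (rankAt c₀ t) := by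
  rw [← sum_cylinder_rankAfter k (n - 1 - t) t (by omega) _ (rankAt_le c₀ t)]
  exact sum_congr rfl fun c hc => by rw [payoff, rankAt_eq_of_mem_cylinder ht hc]

def Adapted (τ : Code n → Fin n) : Prop :=
  ∀ c c' : Code n, (∀ i, i ≤ τ c → c i = c' i) → τ c' = τ c

lemma Adapted.eq_of_mem_cylinder {τ : Code n → Fin n} (hτ : Adapted τ) {t : ℕ} {c₀ c : Code n}
    (hc : c ∈ cylinder (t + 1) c₀) (h : (τ c₀ : ℕ) ≤ t) : τ c = τ c₀ :=
  hτ c₀ c fun i hi => (mem_cylinder.1 hc i (Nat.lt_succ_of_le ((Fin.le_def.1 hi).trans h))).symm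

theorem sum_payoff_le_of_adapted (k : ℕ) {τ : Code n → Fin n} (hτ : Adapted τ) :
    ∀ d t, t + d = n → ∀ c₀ : Code n, (∀ c ∈ cylinder t c₀, t ≤ (τ c : ℕ)) →
      ∑ c ∈ cylinder t c₀, payoff k c (τ c) ≤ numCompletions n t * optProb n k d := by
  intro d
  induction d with
  | zero =>
    intro t ht c₀ hτt
    exact absurd (hτt c₀ (self_mem_cylinder t c₀)) (by omega)
  | succ d ih =>
    intro t htd c₀ hτt
    have ht : t < n := by omega
    rw [sum_cylinder_eq_sum_sum ht, numCompletions_mul_optProb_succ k (by omega : t + d + 1 = n)]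
    refine sum_le_sum fun y _ => ?_
    set u := Function.update c₀ ⟨t, ht⟩ y
    by_cases hstop : (τ u : ℕ) = t
    · have hτc : ∀ c ∈ cylinder (t + 1) u, (τ c : ℕ) = t := fun c hc => by
        rw [hτ.eq_of_mem_cylinder hc hstop.le, hstop]
      rw [sum_congr rfl fun c hc => by rw [hτc c hc], sum_payoff_cylinder k ht,
        rankAt_update_self, show n - 1 - t = d by omega]
      gcongr
      exact le_max_left _ _
    · have hgo : ∀ c ∈ cylinder (t + 1) u, t + 1 ≤ (τ c : ℕ) := fun c hc => by
        by_contra! hlt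
        have hτc := hτt c (cylinder_succ_update_subset ht c₀ y hc)
        have hτu : τ u = τ c := hτ.eq_of_mem_cylinder (mem_cylinder_comm.1 hc) (by omega)
        omega
      calc _ ≤ numCompletions n (t + 1) * optProb n k d := ih (t + 1) (by omega) u hgo
        _ ≤ _ := by gcongr; exact le_max_right _ _

noncomputable def stopSet (k : ℕ) (c : Code n) : Finset (Fin n) :=
  {t | optProb n k (n - 1 - t) ≤ stopProb n k (n - 1 - t) (rankAt c t)}

lemma mem_stopSet {k : ℕ} {c : Code n} {t : Fin n} :
    t ∈ stopSet k c ↔ optProb n k (n - 1 - t) ≤ stopProb n k (n - 1 - t) (rankAt c t) := by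
  simp [stopSet]

lemma stopSet_nonempty (k : ℕ) (hn : 0 < n) (c : Code n) : (stopSet k c).Nonempty :=
  ⟨⟨n - 1, by omega⟩, mem_stopSet.2 <| by
    simpa [show n - 1 - (n - 1) = 0 by omega, optProb] using stopProb_nonneg n k 0 _⟩

noncomputable def greedy (k : ℕ) (hn : 0 < n) (c : Code n) : Fin n :=
  (stopSet k c).min' (stopSet_nonempty k hn c)

lemma mem_stopSet_congr {k : ℕ} {c c' : Code n} {s t : Fin n}
    (h : ∀ i, i ≤ t → c i = c' i) (hs : s ≤ t) : s ∈ stopSet k c ↔ s ∈ stopSet k c' := by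
  simp only [mem_stopSet, rankAt, dif_pos s.isLt, Fin.eta, h s hs]

lemma greedy_adapted (k : ℕ) (hn : 0 < n) : Adapted (greedy k hn) := by
  intro c c' h
  apply le_antisymm
  · exact min'_le _ _ ((mem_stopSet_congr h le_rfl).1 (min'_mem _ _))
  · refine le_min' _ _ _ fun s hs => ?_
    by_contra! hlt
    exact (min'_le _ _ ((mem_stopSet_congr h hlt.le).2 hs)).not_gt hlt

theorem sum_payoff_greedy (k : ℕ) (hn : 0 < n) :
    ∀ d t, t + d = n → ∀ c₀ : Code n, (∀ c ∈ cylinder t c₀, t ≤ (greedy k hn c : ℕ)) →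
      ∑ c ∈ cylinder t c₀, payoff k c (greedy k hn c) = numCompletions n t * optProb n k d := by
  intro d
  induction d with
  | zero =>
    intro t ht c₀ hτt
    exact absurd (hτt c₀ (self_mem_cylinder t c₀)) (by omega)
  | succ d ih =>
    intro t htd c₀ hτt
    have ht : t < n := by omega
    rw [sum_cylinder_eq_sum_sum ht, numCompletions_mul_optProb_succ k (by omega : t + d + 1 = n)]
    refine sum_congr rfl fun y _ => ?_
    set u := Function.update c₀ ⟨t, ht⟩ y
    have hmem : ∀ c ∈ cylinder (t + 1) u, ((⟨t, ht⟩ : Fin n) ∈ stopSet k c ↔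
        optProb n k d ≤ stopProb n k d ((y : ℕ) + 1)) := fun c hc => by
      rw [mem_stopSet, rankAt_eq_of_mem_cylinder ht hc, rankAt_update_self,
        show n - 1 - t = d by omega]
    have hτt' : ∀ c ∈ cylinder (t + 1) u, t ≤ (greedy k hn c : ℕ) :=
      fun c hc => hτt c (cylinder_succ_update_subset ht c₀ y hc)
    by_cases hQ : optProb n k d ≤ stopProb n k d ((y : ℕ) + 1)
    · have hτc : ∀ c ∈ cylinder (t + 1) u, (greedy k hn c : ℕ) = t := fun c hc =>
        le_antisymm (min'_le _ _ ((hmem c hc).2 hQ)) (hτt' c hc)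
      rw [sum_congr rfl fun c hc => by rw [hτc c hc], sum_payoff_cylinder k ht,
        rankAt_update_self, show n - 1 - t = d by omega, max_eq_left hQ]
    · have hgo : ∀ c ∈ cylinder (t + 1) u, t + 1 ≤ (greedy k hn c : ℕ) := fun c hc => by
        refine lt_of_le_of_ne (hτt' c hc) fun heq => hQ ((hmem c hc).1 ?_)
        rw [show (⟨t, ht⟩ : Fin n) = greedy k hn c from Fin.ext heq]
        exact min'_mem _ _
      rw [ih (t + 1) (by omega) u hgo, max_eq_right (not_le.1 hQ).le]

lemma lt_iff_card_filter_le_lt {ι α : Type*} [LinearOrder α] {S : Finset ι} {f : ι → α} {j : ι}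
    (hj : j ∈ S) (b : α) : b < f j ↔ #{i ∈ S | f i ≤ b} < #{i ∈ S | f i ≤ f j} := by
  constructor
  · intro h
    refine card_lt_card ((ssubset_iff_of_subset fun i hi => ?_).2 ⟨j, ?_, ?_⟩)
    · rw [mem_filter] at hi ⊢
      exact ⟨hi.1, hi.2.trans h.le⟩
    · simp [hj]
    · simp [h]
  · intro h
    by_contra! hle
    refine h.not_ge (card_le_card fun i hi => ?_)
    rw [mem_filter] at hi ⊢
    exact ⟨hi.1, hi.2.trans hle⟩

lemma card_filter_val_le_succ {s : ℕ} (hs : s + 1 < n) (P : Fin n → Prop) [DecidablePred P] :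
    #{i : Fin n | (i : ℕ) ≤ s + 1 ∧ P i} =
      #{i : Fin n | (i : ℕ) ≤ s ∧ P i} + if P ⟨s + 1, hs⟩ then 1 else 0 := by
  have hle : ∀ i : Fin n, (i : ℕ) ≤ s + 1 ↔ (i : ℕ) ≤ s ∨ i = ⟨s + 1, hs⟩ := fun i => by
    rw [Fin.ext_iff]
    change _ ↔ _ ∨ (i : ℕ) = s + 1
    omega
  split_ifs with hP
  · rw [← card_insert_of_notMem (a := ⟨s + 1, hs⟩) (by simp)]
    congr 1
    ext i
    simp only [mem_insert, mem_filter, mem_univ, true_and, hle]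
    constructor
    · rintro ⟨hi | rfl, hPi⟩
      exacts [Or.inr ⟨hi, hPi⟩, Or.inl rfl]
    · rintro (rfl | ⟨hi, hPi⟩)
      exacts [⟨Or.inr rfl, hP⟩, ⟨Or.inl hi, hPi⟩]
  · rw [add_zero]
    congr 1
    ext i
    simp only [mem_filter, mem_univ, true_and, hle]
    constructor
    · rintro ⟨hi | rfl, hPi⟩
      exacts [⟨hi, hPi⟩, absurd hPi hP]
    · exact fun ⟨hi, hPi⟩ => ⟨Or.inl hi, hPi⟩

def rankAmong (σ : Equiv.Perm (Fin n)) (s : ℕ) (j : Fin n) : ℕ :=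
  #{i : Fin n | (i : ℕ) ≤ s ∧ σ i ≤ σ j}

lemma relRank_eq_rankAmong (σ : Equiv.Perm (Fin n)) (j : Fin n) :
    relRank σ j = rankAmong σ j j := by
  simp only [relRank, rankAmong, Fin.le_def]

lemma rankAmong_of_le (σ : Equiv.Perm (Fin n)) {s : ℕ} (hs : n ≤ s + 1) (j : Fin n) :
    rankAmong σ s j = σ j + 1 := by
  rw [rankAmong, ← Fin.card_Iic]
  exact card_equiv σ fun i => by simp [show (i : ℕ) ≤ s by omega]

lemma rankAmong_succ (σ : Equiv.Perm (Fin n)) {s : ℕ} (hs : s + 1 < n) {j : Fin n}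
    (hj : (j : ℕ) ≤ s) :
    rankAmong σ (s + 1) j = rankAmong σ s j + if σ ⟨s + 1, hs⟩ < σ j then 1 else 0 := by
  have hne : σ ⟨s + 1, hs⟩ ≠ σ j := fun h => by
    have hval := congrArg Fin.val (σ.injective h)
    simp only at hval
    omega
  rw [rankAmong, card_filter_val_le_succ hs, ← rankAmong]
  exact congrArg _ (if_congr (le_iff_lt_or_eq.trans (or_iff_left hne)) rfl rfl)

lemma relRank_le_rankAmong_iff (σ : Equiv.Perm (Fin n)) {s : ℕ} (hs : s + 1 < n) {j : Fin n}
    (hj : (j : ℕ) ≤ s) :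
    relRank σ ⟨s + 1, hs⟩ ≤ rankAmong σ s j ↔ σ ⟨s + 1, hs⟩ < σ j := by
  have hrel : relRank σ ⟨s + 1, hs⟩ = rankAmong σ s ⟨s + 1, hs⟩ + 1 := by
    rw [relRank_eq_rankAmong, rankAmong, card_filter_val_le_succ hs, if_pos le_rfl]
    rfl
  rw [hrel, Nat.add_one_le_iff, rankAmong, rankAmong, ← filter_filter, ← filter_filter]
  exact (lt_iff_card_filter_le_lt (by simpa using hj) _).symm

lemma relRank_pos (σ : Equiv.Perm (Fin n)) (t : Fin n) : 0 < relRank σ t :=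
  card_pos.2 ⟨t, by simp⟩

lemma relRank_le (σ : Equiv.Perm (Fin n)) (t : Fin n) : relRank σ t ≤ t + 1 :=
  Fin.card_Iic t ▸ card_le_card fun _ hi => mem_Iic.2 (mem_filter.1 hi).2.1

def relCode (σ : Equiv.Perm (Fin n)) : Code n := fun t =>
  ⟨relRank σ t - 1, by have := relRank_le σ t; omega⟩

lemma relCode_add_one (σ : Equiv.Perm (Fin n)) (t : Fin n) :
    (relCode σ t : ℕ) + 1 = relRank σ t :=
  Nat.sub_add_cancel (relRank_pos σ t)

lemma rankAt_relCode (σ : Equiv.Perm (Fin n)) {s : ℕ} (hs : s < n) :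
    rankAt (relCode σ) s = relRank σ ⟨s, hs⟩ := by
  rw [rankAt, dif_pos hs, relCode_add_one]

lemma rankAfter_rankAmong (σ : Equiv.Perm (Fin n)) (j : Fin n) :
    ∀ f s, (j : ℕ) ≤ s → s + f + 1 = n →
      rankAfter (rankAt (relCode σ)) f s (rankAmong σ s j) = σ j + 1 := by
  intro f
  induction f with
  | zero => exact fun s _ hs => rankAmong_of_le σ (by omega) j
  | succ f ih =>
    intro s hj hsf
    have hs : s + 1 < n := by omega
    rw [rankAfter, rankAt_relCode σ hs, ← ih (s + 1) (by omega) (by omega),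
      rankAmong_succ σ hs hj]
    simp only [relRank_le_rankAmong_iff σ hs hj]
    split_ifs <;> rfl

lemma rankAfter_relCode (σ : Equiv.Perm (Fin n)) (j : Fin n) :
    rankAfter (rankAt (relCode σ)) (n - 1 - j) j (rankAt (relCode σ) j) = absRank σ j := by
  rw [rankAt_relCode σ j.isLt, Fin.eta, relRank_eq_rankAmong, absRank]
  exact rankAfter_rankAmong σ j _ j le_rfl (by omega)

lemma relCode_injective : Function.Injective (relCode (n := n)) := fun σ σ' h =>
  Equiv.ext fun j => Fin.ext <| by
    have := rankAfter_relCode σ j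
    rw [h, rankAfter_relCode, absRank, absRank] at this
    omega

lemma card_code (n : ℕ) : Fintype.card (Code n) = n.factorial := by
  simp only [Fintype.card_pi, Fintype.card_fin]
  rw [Fin.prod_univ_eq_prod_range (· + 1), prod_range_add_one_eq_factorial]

noncomputable def codeEquiv (n : ℕ) : Equiv.Perm (Fin n) ≃ Code n :=
  Equiv.ofBijective relCode <| (Fintype.bijective_iff_injective_and_card _).2
    ⟨relCode_injective, by rw [card_code, Fintype.card_perm, Fintype.card_fin]⟩

lemma relCode_codeEquiv_symm (c : Code n) : relCode ((codeEquiv n).symm c) = c :=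
  (codeEquiv n).apply_symm_apply c

lemma selectProb_eq_sum_payoff (k : ℕ) (τ : Equiv.Perm (Fin n) → Fin n) :
    selectProb n {k} τ =
      (∑ c : Code n, payoff k c (τ ((codeEquiv n).symm c))) / n.factorial := by
  rw [selectProb, card_filter, ← (codeEquiv n).sum_comp]
  push_cast
  congr 1
  refine sum_congr rfl fun σ _ => ?_
  rw [Equiv.symm_apply_apply]
  simp only [mem_singleton, codeEquiv, Equiv.ofBijective_apply, payoff, rankAfter_relCode]

lemma adapted_of_isStoppingRule {τ : Equiv.Perm (Fin n) → Fin n} (hτ : IsStoppingRule τ) :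
    Adapted (τ ∘ (codeEquiv n).symm) := fun c c' h =>
  hτ _ _ fun i hi => by
    rw [← relCode_add_one, ← relCode_add_one, relCode_codeEquiv_symm, relCode_codeEquiv_symm,
      h i hi]

lemma Adapted.isStoppingRule {τ : Code n → Fin n} (hτ : Adapted τ) :
    IsStoppingRule (τ ∘ relCode) := fun σ σ' h =>
  hτ _ _ fun i hi => Fin.ext <| by simp only [relCode, h i hi]

theorem pRank_eq_optProb (hn : 0 < n) (k : ℕ) : pRank n k = optProb n k n := by
  have hcyl (f : Code n → ℝ) : ∑ c : Code n, f c = ∑ c ∈ cylinder 0 (relCode 1), f c := by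
    rw [cylinder_zero]
  have hfac : (0 : ℝ) < n.factorial := by positivity
  refine IsGreatest.csSup_eq ⟨⟨greedy k hn ∘ relCode, (greedy_adapted k hn).isStoppingRule, ?_⟩, ?_⟩
  · rw [selectProb_eq_sum_payoff, eq_div_iff hfac.ne']
    simp only [Function.comp_apply, relCode_codeEquiv_symm]
    rw [hcyl, sum_payoff_greedy k hn n 0 (zero_add n) _ fun _ _ => Nat.zero_le _,
      numCompletions_zero, mul_comm]
  · rintro _ ⟨τ, hτ, rfl⟩
    rw [selectProb_eq_sum_payoff, div_le_iff₀ hfac, mul_comm, ← numCompletions_zero, hcyl]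
    exact sum_payoff_le_of_adapted k (adapted_of_isStoppingRule hτ) n 0 (zero_add n) _
      fun _ _ => Nat.zero_le _

lemma sum_stopProb {k : ℕ} (hk : 1 ≤ k) (hkn : k ≤ n) :
    ∀ d < n, ∑ x ∈ Icc 1 (n - d), stopProb n k d x = (n - d : ℕ) / n := by
  intro d
  induction d with
  | zero =>
    intro hn
    rw [Nat.sub_zero, div_self (by positivity)]
    simp only [stopProb, sum_ite_eq', mem_Icc, hk, hkn, and_self, if_true]
  | succ d ih =>
    intro hd
    obtain ⟨m, hm⟩ : ∃ m, n - d = m + 1 := ⟨n - d - 1, by omega⟩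
    have hsum := ih (by omega)
    rw [hm, sum_Icc_one_eq_sum_range] at hsum
    have hshift : ∑ x ∈ range m, ((x + 1 : ℕ) : ℝ) * stopProb n k d (x + 1 + 1) =
        ∑ x ∈ range (m + 1), (x : ℝ) * stopProb n k d (x + 1) := by
      rw [sum_range_succ']
      simp
    have hlast : ∑ x ∈ range m, ((m - x : ℕ) : ℝ) * stopProb n k d (x + 1) =
        ∑ x ∈ range (m + 1), ((m - x : ℕ) : ℝ) * stopProb n k d (x + 1) := by
      rw [sum_range_succ]
      simp
    have hcoef : ∀ x ∈ range (m + 1), (x : ℝ) * stopProb n k d (x + 1) +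
        ((m - x : ℕ) : ℝ) * stopProb n k d (x + 1) = m * stopProb n k d (x + 1) := fun x hx => by
      rw [Nat.cast_sub (by simpa [Nat.lt_succ_iff] using hx)]
      ring
    simp only [stopProb]
    rw [show n - (d + 1) = m by omega, hm, sum_Icc_one_eq_sum_range, ← sum_div]
    simp_rw [show ∀ x, m + 1 - (x + 1) = m - x from fun x => by omega]
    rw [sum_add_distrib, hshift, hlast, ← sum_add_distrib, sum_congr rfl hcoef, ← mul_sum, hsum]
    field_simp

lemma stopProb_best : ∀ d < n, ∀ x,
    stopProb n 1 d x = if x = 1 then ((n - d : ℕ) : ℝ) / n else 0 := by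
  intro d
  induction d with
  | zero => intro hn x; simp [stopProb, div_self (show (n : ℝ) ≠ 0 by positivity)]
  | succ d ih =>
    intro hd x
    have hnd : ((n - d : ℕ) : ℝ) = (n - (d + 1) : ℕ) + 1 := by norm_cast; omega
    rw [stopProb, ih (by omega), ih (by omega)]
    by_cases hx : x = 1
    · subst hx
      simp only [if_true, show ¬1 + 1 = 1 by omega, if_false, mul_zero, zero_add,
        show n - d - 1 = n - (d + 1) by omega]
      rw [hnd]
      field_simp
    · rcases Nat.eq_zero_or_pos x with rfl | hx0
      · simp
      · simp [hx, hx0.ne']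

lemma stopProb_worst : ∀ d < n, ∀ x,
    stopProb n n d x = if x = n - d then ((n - d : ℕ) : ℝ) / n else 0 := by
  intro d
  induction d with
  | zero => intro hn x; simp [stopProb, div_self (show (n : ℝ) ≠ 0 by positivity)]
  | succ d ih =>
    intro hd x
    have hnd : ((n - d : ℕ) : ℝ) = (n - (d + 1) : ℕ) + 1 := by norm_cast; omega
    rw [stopProb, ih (by omega), ih (by omega)]
    by_cases hx : x = n - (d + 1)
    · subst hx
      simp only [show n - (d + 1) + 1 = n - d by omega, show n - (d + 1) ≠ n - d by omega,
        if_true, if_false, mul_zero, add_zero]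
      rw [hnd]
      field_simp
    · have hx' : x + 1 ≠ n - d := by omega
      by_cases hx'' : x = n - d
      · simp [hx'', show n - d ≠ n - (d + 1) by omega]
      · simp [hx, hx', hx'']

/-- The value recursion when the stopping probability is concentrated on a single one of the
`m` possible relative ranks, with mass `m / n`. -/
noncomputable def valueStep (n m : ℕ) (v : ℝ) : ℝ := v + (max ((m : ℝ) / n) v - v) / m

lemma sum_ite_eq_add {ι M : Type*} [DecidableEq ι] [AddCommGroup M] {s : Finset ι} {a : ι}
    (ha : a ∈ s) (A B : M) : ∑ x ∈ s, (if x = a then A else B) = #s • B + (A - B) := by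
  calc ∑ x ∈ s, (if x = a then A else B) = ∑ x ∈ s, (B + if x = a then A - B else 0) :=
        sum_congr rfl fun x _ => by split_ifs <;> abel
    _ = _ := by rw [sum_add_distrib, sum_const, sum_ite_eq', if_pos ha]

lemma optProb_succ_of_concentrated {k d a : ℕ} (hd : d < n) (ha : a ∈ Icc 1 (n - d))
    (h : ∀ x, stopProb n k d x = if x = a then ((n - d : ℕ) : ℝ) / n else 0) :
    optProb n k (d + 1) = valueStep n (n - d) (optProb n k d) := by
  have hmax : ∀ x, max (stopProb n k d x) (optProb n k d) =
      if x = a then max (((n - d : ℕ) : ℝ) / n) (optProb n k d) else optProb n k d := fun x => by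
    rw [h]
    split_ifs
    exacts [rfl, max_eq_right (optProb_nonneg n k d)]
  rw [optProb, sum_congr rfl fun x _ => hmax x, sum_ite_eq_add ha, Nat.card_Icc, valueStep,
    Nat.add_sub_cancel, nsmul_eq_mul]
  have : ((n - d : ℕ) : ℝ) ≠ 0 := Nat.cast_ne_zero.2 (by omega)
  field_simp

lemma sum_max_le {ι : Type*} (s : Finset ι) {a : ι → ℝ} {c : ℝ} (hc : 0 ≤ c)
    (ha : ∀ x ∈ s, 0 ≤ a x) : ∑ x ∈ s, max (a x) c ≤ #s * c + (max (∑ x ∈ s, a x) c - c) := by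
  induction s using Finset.cons_induction with
  | empty => simp [hc]
  | cons x s hx ih =>
    have hax := ha x (mem_cons_self x s)
    have hs : ∀ y ∈ s, 0 ≤ a y := fun y hy => ha y (mem_cons_of_mem hy)
    have hmax : max (a x) c + max (∑ y ∈ s, a y) c ≤ c + max (a x + ∑ y ∈ s, a y) c := by
      have := sum_nonneg hs
      grind
    rw [sum_cons, sum_cons, card_cons]
    push_cast
    linarith [ih hs]

/-- Concentrating the mass of `stopProb n k d` on a single relative rank, as for `k = 1`, is the
most favourable case. -/
lemma optProb_succ_le {k d : ℕ} (hk : 1 ≤ k) (hkn : k ≤ n) (hd : d < n) :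
    optProb n k (d + 1) ≤ valueStep n (n - d) (optProb n k d) := by
  have hsum := sum_max_le (Icc 1 (n - d)) (optProb_nonneg n k d)
    fun x _ => stopProb_nonneg n k d x
  rw [sum_stopProb hk hkn d hd, Nat.card_Icc, Nat.add_sub_cancel] at hsum
  have : (0 : ℝ) < (n - d : ℕ) := Nat.cast_pos.2 (by omega)
  rw [optProb, valueStep, div_le_iff₀ this]
  calc _ ≤ _ := hsum
    _ = _ := by field_simp

lemma optProb_best_succ {d : ℕ} (hd : d < n) :
    optProb n 1 (d + 1) = valueStep n (n - d) (optProb n 1 d) :=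
  optProb_succ_of_concentrated hd (by simp; omega) (stopProb_best d hd)

lemma optProb_worst_eq_optProb_best : ∀ d ≤ n, optProb n n d = optProb n 1 d := by
  intro d
  induction d with
  | zero => simp [optProb]
  | succ d ih =>
    intro hd
    rw [optProb_succ_of_concentrated hd (by simp; omega) (stopProb_worst d hd),
      optProb_best_succ hd, ih (by omega)]

lemma optProb_one {k : ℕ} (hk : 1 ≤ k) (hkn : k ≤ n) : optProb n k 1 = 1 / n := by
  simp [optProb, stopProb, apply_ite (max · (0 : ℝ)), hk, hkn]

lemma optProb_two_of_lt {k : ℕ} (hk : 1 < k) (hkn : k < n) :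
    optProb n k 2 = (2 * n - 4) / (n * (n - 1)) := by
  have hn : (3 : ℝ) ≤ n := by exact_mod_cast (show 3 ≤ n by omega)
  have hk' : (2 : ℝ) ≤ k := by exact_mod_cast hk
  have hkn' : (k : ℝ) + 1 ≤ n := by exact_mod_cast hkn
  have hmax : ∀ x, max (stopProb n k 1 x) (optProb n k 1) =
      1 / n + ((if x = k - 1 then ((k : ℝ) - 2) / n else 0) +
        (if x = k then ((n : ℝ) - k - 1) / n else 0)) := fun x => by
    rw [optProb_one hk.le hkn.le]
    by_cases hx : x = k - 1
    · have hQ : stopProb n k 1 x = (k - 1) / n := by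
        simp [stopProb, hx, show k - 1 + 1 = k by omega, show k - 1 ≠ k by omega,
          Nat.cast_sub hk.le]
      rw [hQ, if_pos hx, if_neg (by omega), max_eq_left (by gcongr; linarith)]
      ring
    · by_cases hx' : x = k
      · have hQ : stopProb n k 1 x = (n - k) / n := by
          simp [stopProb, hx', Nat.cast_sub hkn.le]
        rw [hQ, if_neg hx, if_pos hx', max_eq_left (by gcongr; linarith)]
        ring
      · have hQ : stopProb n k 1 x = 0 := by
          simp [stopProb, hx', show x + 1 ≠ k by omega]
        rw [hQ, if_neg hx, if_neg hx', max_eq_right (by positivity)]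
        ring
  rw [optProb, sum_congr rfl fun x _ => hmax x, sum_add_distrib, sum_add_distrib, sum_const,
    sum_ite_eq', sum_ite_eq', Nat.card_Icc]
  simp only [mem_Icc, show 1 ≤ k - 1 ∧ k - 1 ≤ n - 1 by omega, show 1 ≤ k ∧ k ≤ n - 1 by omega,
    and_self, if_true, nsmul_eq_mul, show n - 1 + 1 - 1 = n - 1 by omega]
  push_cast [Nat.cast_sub (show 1 ≤ n by omega)]
  have : (n : ℝ) - 1 ≠ 0 := by linarith
  field_simp
  ring

lemma optProb_best_two (hn : 2 ≤ n) : optProb n 1 2 = 1 / n + (n - 2) / (n * (n - 1)) := by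
  have hn' : (2 : ℝ) ≤ n := by exact_mod_cast hn
  rw [optProb_best_succ (by omega), optProb_one le_rfl (by omega), valueStep]
  push_cast [Nat.cast_sub (show 1 ≤ n by omega)]
  rw [max_eq_left (by gcongr; linarith)]
  have : (n : ℝ) - 1 ≠ 0 := by linarith
  field_simp
  ring

lemma valueStep_strictMono {m : ℕ} (hm : 2 ≤ m) : StrictMono (valueStep n m) := by
  intro v w h
  have hm' : (2 : ℝ) ≤ m := by exact_mod_cast hm
  have hmax : max ((m : ℝ) / n) v ≤ max ((m : ℝ) / n) w := max_le_max le_rfl h.le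
  simp only [valueStep]
  rw [← sub_pos]
  field_simp
  nlinarith

lemma le_valueStep (m : ℕ) (v : ℝ) : v ≤ valueStep n m v :=
  le_add_of_nonneg_right (div_nonneg (sub_nonneg.2 (le_max_right _ _)) (Nat.cast_nonneg _))

lemma optProb_lt_optProb_best_of_two_le {k : ℕ} (hk : 1 < k) (hkn : k < n) :
    ∀ d, 2 ≤ d → d < n → optProb n k d < optProb n 1 d := by
  intro d hd
  induction d, hd using Nat.le_induction with
  | base =>
    intro _
    have hn : (3 : ℝ) ≤ n := by exact_mod_cast (show 3 ≤ n by omega)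
    have hn1 : (0 : ℝ) < n - 1 := by linarith
    have hdiff : optProb n 1 2 - optProb n k 2 = 1 / (n * (n - 1)) := by
      rw [optProb_two_of_lt hk hkn, optProb_best_two (by omega)]
      field_simp
      ring
    have : (0 : ℝ) < 1 / (n * (n - 1)) := by positivity
    linarith
  | succ d hd ih =>
    intro hdn
    calc optProb n k (d + 1) ≤ valueStep n (n - d) (optProb n k d) :=
          optProb_succ_le (by omega) hkn.le (by omega)
      _ < valueStep n (n - d) (optProb n 1 d) := valueStep_strictMono (by omega) (ih (by omega))
      _ = optProb n 1 (d + 1) := (optProb_best_succ (by omega)).symm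

lemma one_div_lt_optProb_best (hn : 3 ≤ n) : ∀ d, 2 ≤ d → d ≤ n → 1 / n < optProb n 1 d := by
  intro d hd
  induction d, hd using Nat.le_induction with
  | base =>
    intro _
    have hn' : (3 : ℝ) ≤ n := by exact_mod_cast hn
    rw [optProb_best_two (by omega), lt_add_iff_pos_right]
    exact div_pos (by linarith) (by nlinarith)
  | succ d hd ih =>
    intro hdn
    exact (ih (by omega)).trans_le ((le_valueStep _ _).trans_eq (optProb_best_succ (by omega)).symm)

/-- With one arrival left, `valueStep n 1 = max (1 / n)` is strictly monotone only above `1 / n`. -/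
theorem optProb_lt_optProb_best {k : ℕ} (hk : 1 < k) (hkn : k < n) :
    optProb n k n < optProb n 1 n := by
  obtain ⟨d, rfl⟩ : ∃ d, n = d + 1 := ⟨n - 1, by omega⟩
  have hlt := optProb_lt_optProb_best_of_two_le hk hkn d (by omega) (by omega)
  have hpos := one_div_lt_optProb_best (show 3 ≤ d + 1 by omega) d (by omega) (by omega)
  have hstep (v : ℝ) : valueStep (d + 1) (d + 1 - d) v = max (1 / ((d + 1 : ℕ) : ℝ)) v := by
    simp [valueStep, show d + 1 - d = 1 by omega]
  calc optProb (d + 1) k (d + 1) ≤ valueStep (d + 1) (d + 1 - d) (optProb (d + 1) k d) :=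
        optProb_succ_le (by omega) hkn.le (by omega)
    _ < valueStep (d + 1) (d + 1 - d) (optProb (d + 1) 1 d) := by
      rw [hstep, hstep]
      exact max_lt (hpos.trans_le (le_max_right _ _)) (hlt.trans_le (le_max_right _ _))
    _ = optProb (d + 1) 1 (d + 1) := (optProb_best_succ (by omega)).symm

end Secretary

theorem pRank_max_at_extremes_general (n k : ℕ) (hk1 : 1 < k) (hkn : k < n) :
    pRank n 1 = pRank n n ∧ pRank n k < pRank n 1 := by
  have hn : 0 < n := by omega
  rw [Secretary.pRank_eq_optProb hn, Secretary.pRank_eq_optProb hn,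
    Secretary.pRank_eq_optProb hn, Secretary.optProb_worst_eq_optProb_best n le_rfl]
  exact ⟨rfl, Secretary.optProb_lt_optProb_best hk1 hkn⟩

theorem pRank_max_at_extremes (n k : ℕ) (hn : 3 ≤ n) (hk1 : 1 < k) (hkn : k < n) :
    pRank n 1 = pRank n n ∧ pRank n k < pRank n 1 :=
  pRank_max_at_extremes_general n k hk1 hkn
end

section
/- The limits d_1 = lim_{n→∞} a_n/n and d_2 = lim_{n→∞} b_n/n exist and equal d_1 = 2/(2√e + √(4e - 6√e)) and d_2 = 1/√e, where a_n and b_n are the thresholds of the optimal rule for selecting the 3rd best candidate. -/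
/-!
Tail sums `∑_{i=j}^{n} 1/(i-2)` are squeezed between logarithms, so the condition defining `b_n`
says `log (n / b_n) = 1/2 + O(1/n)`, i.e. `b_n = n/√e + O(1)`, and the tail sum from `b_n` tends
to `1/2`. Hence `u_n ~ n²/√e`, the constant term of `f_n` is `~ 2n²/√e`, and `f_n(nt)/n²` tends to
`3t² - 4t + 2/√e`. Since `a_n` is the ceiling of the smaller root of `f_n`, `a_n / n` tends to the
smaller root `(4 - √(16 - 24/√e))/6` of the limit, which is the stated constant.
-/

open Finset

open Filter Topology Real

lemma log_add_one_sub_log_le_inv {x : ℝ} (hx : 0 < x) : log (x + 1) - log x ≤ x⁻¹ := by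
  have h := log_le_sub_one_of_pos (div_pos (by linarith : 0 < x + 1) hx)
  rw [log_div (by linarith) hx.ne'] at h
  calc log (x + 1) - log x ≤ (x + 1) / x - 1 := h
    _ = x⁻¹ := by field_simp; ring

lemma inv_add_one_le_log_add_one_sub_log {x : ℝ} (hx : 0 < x) :
    (x + 1)⁻¹ ≤ log (x + 1) - log x := by
  have h := one_sub_inv_le_log_of_pos (div_pos (by linarith : 0 < x + 1) hx)
  rw [log_div (by linarith) hx.ne', inv_div] at h
  calc (x + 1)⁻¹ = 1 - x / (x + 1) := by field_simp; ring
    _ ≤ _ := h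

lemma log_sub_log_le_sum_Ico_inv_sub (c : ℝ) {a n : ℕ} (hca : c < a) (han : a ≤ n) :
    log (n - c) - log (a - c) ≤ ∑ i ∈ Ico a n, 1 / ((i : ℝ) - c) := by
  induction n, han using Nat.le_induction with
  | base => simp
  | succ n han ih =>
    have hn : 0 < (n : ℝ) - c := by linarith [(Nat.cast_le.mpr han : (a : ℝ) ≤ n)]
    have step := log_add_one_sub_log_le_inv hn
    rw [show (n : ℝ) - c + 1 = (n + 1 : ℕ) - c by push_cast; ring] at step
    rw [sum_Ico_succ_top han, one_div]
    linarith

lemma sum_Ico_inv_sub_le_log_sub_log (c : ℝ) {a n : ℕ} (hca : c + 1 < a) (han : a ≤ n) :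
    ∑ i ∈ Ico a n, 1 / ((i : ℝ) - c) ≤ log (n - 1 - c) - log (a - 1 - c) := by
  induction n, han using Nat.le_induction with
  | base => simp
  | succ n han ih =>
    have hn : 0 < (n : ℝ) - 1 - c := by linarith [(Nat.cast_le.mpr han : (a : ℝ) ≤ n)]
    have step := inv_add_one_le_log_add_one_sub_log hn
    rw [show (n : ℝ) - 1 - c + 1 = n - c by ring] at step
    rw [sum_Ico_succ_top han, one_div, Nat.cast_succ, add_sub_cancel_right]
    linarith

lemma tendsto_mul_natCast_div_atTop (L : ℝ) : Tendsto (fun n : ℕ => L * n / n) atTop (𝓝 L) :=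
  tendsto_const_nhds.congr' <| (eventually_ne_atTop 0).mono fun _ hn =>
    (mul_div_cancel_right₀ L (Nat.cast_ne_zero.mpr hn)).symm

lemma Filter.Tendsto.div_natCast_of_abs_sub_le {x y : ℕ → ℝ} {L C : ℝ}
    (hy : Tendsto (fun n => y n / n) atTop (𝓝 L)) (hxy : ∀ᶠ n in atTop, |x n - y n| ≤ C) :
    Tendsto (fun n => x n / n) atTop (𝓝 L) := by
  have hsmall : Tendsto (fun n => (x n - y n) / n) atTop (𝓝 0) :=
    squeeze_zero_norm' (hxy.mono fun n h => by
      rw [norm_div, Real.norm_natCast]; exact div_le_div_of_nonneg_right h n.cast_nonneg)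
      (tendsto_const_div_atTop_nhds_zero_nat C)
  simpa [sub_div] using hy.add hsmall

lemma Filter.Tendsto.atTop_of_div_natCast {x : ℕ → ℝ} {L : ℝ} (hL : 0 < L)
    (hx : Tendsto (fun n => x n / n) atTop (𝓝 L)) : Tendsto x atTop atTop :=
  (hx.pos_mul_atTop hL tendsto_natCast_atTop_atTop).congr' <|
    (eventually_ne_atTop 0).mono fun _ hn => div_mul_cancel₀ _ (Nat.cast_ne_zero.mpr hn)

noncomputable def lowerRoot (c p q : ℝ) : ℝ := (p - √(p ^ 2 - 4 * c * q)) / (2 * c)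

lemma quadratic_nonpos_iff {c p q : ℝ} (hc : 0 < c) (hD : 0 ≤ p ^ 2 - 4 * c * q) (x : ℝ) :
    c * x ^ 2 - p * x + q ≤ 0 ↔
      lowerRoot c p q ≤ x ∧ x ≤ lowerRoot c p q + √(p ^ 2 - 4 * c * q) / c := by
  set s := √(p ^ 2 - 4 * c * q) with hs_def
  have hs : s ^ 2 = p ^ 2 - 4 * c * q := sq_sqrt hD
  have hle : lowerRoot c p q ≤ lowerRoot c p q + s / c :=
    le_add_of_nonneg_right (div_nonneg (sqrt_nonneg _) hc.le)
  have hfactor : c * x ^ 2 - p * x + q =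
      c * ((x - lowerRoot c p q) * (x - (lowerRoot c p q + s / c))) := by
    rw [lowerRoot, ← hs_def]
    field_simp
    linear_combination hs
  rw [← sub_mul_sub_nonpos_iff x hle, hfactor]
  exact ⟨fun h => nonpos_of_mul_nonpos_right h hc, mul_nonpos_of_nonneg_of_nonpos hc.le⟩

lemma lowerRoot_div (c p q : ℝ) {t : ℝ} (ht : 0 < t) :
    lowerRoot c (p / t) (q / t ^ 2) = lowerRoot c p q / t := by
  have hD : (p / t) ^ 2 - 4 * c * (q / t ^ 2) = (p ^ 2 - 4 * c * q) / t ^ 2 := by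
    field_simp
  rw [lowerRoot, lowerRoot, hD, sqrt_div' _ (sq_nonneg t), sqrt_sq ht.le]
  field_simp

lemma Filter.Tendsto.lowerRoot {α : Type*} {l : Filter α} {p q : α → ℝ} {P Q : ℝ} (c : ℝ)
    (hp : Tendsto p l (𝓝 P)) (hq : Tendsto q l (𝓝 Q)) :
    Tendsto (fun a => lowerRoot c (p a) (q a)) l (𝓝 (lowerRoot c P Q)) :=
  (hp.sub ((hp.pow 2).sub (hq.const_mul (4 * c))).sqrt).div_const (2 * c)

lemma sInf_setOf_nonpos_eq_ceil {f : ℝ → ℝ} {r s : ℝ} {n : ℕ}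
    (hf : ∀ x, f x ≤ 0 ↔ r ≤ x ∧ x ≤ s) (hr : 1 < r) (hrs : r + 1 ≤ s) (hrn : r ≤ n) :
    sInf {j : ℕ | 2 ≤ j ∧ j ≤ n ∧ f j ≤ 0} = ⌈r⌉₊ := by
  have hceil : (⌈r⌉₊ : ℝ) < r + 1 := Nat.ceil_lt_add_one (by linarith)
  have hmem : ⌈r⌉₊ ∈ {j : ℕ | 2 ≤ j ∧ j ≤ n ∧ f j ≤ 0} :=
    ⟨Nat.lt_ceil.mpr (by exact_mod_cast hr), Nat.ceil_le.mpr hrn,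
      (hf _).mpr ⟨Nat.le_ceil r, by linarith⟩⟩
  exact le_antisymm (Nat.sInf_le hmem)
    (le_csInf ⟨_, hmem⟩ fun j hj => Nat.ceil_le.mpr ((hf j).mp hj.2.2).1)

lemma Filter.Tendsto.natCeil_div_natCast {x : ℕ → ℝ} {L : ℝ}
    (hx : Tendsto (fun n => x n / n) atTop (𝓝 L)) (hx₀ : ∀ᶠ n in atTop, 0 ≤ x n) :
    Tendsto (fun n => (⌈x n⌉₊ : ℝ) / n) atTop (𝓝 L) :=
  hx.div_natCast_of_abs_sub_le (C := 1) <| hx₀.mono fun n h => by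
    rw [abs_of_nonneg (sub_nonneg.mpr (Nat.le_ceil _))]
    linarith [Nat.ceil_lt_add_one h]

theorem tendsto_sInf_quadratic_nonpos_div {c P Q : ℝ} {p q : ℕ → ℝ} {f : ℕ → ℝ → ℝ}
    (hc : 0 < c) (hf : ∀ n x, f n x = c * x ^ 2 - p n * x + q n)
    (hp : Tendsto (fun n => p n / n) atTop (𝓝 P))
    (hq : Tendsto (fun n => q n / n ^ 2) atTop (𝓝 Q))
    (hD : 4 * c * Q < P ^ 2) (hρ₀ : 0 < lowerRoot c P Q) (hρ₁ : lowerRoot c P Q < 1) :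
    Tendsto (fun n : ℕ => ((sInf {j : ℕ | 2 ≤ j ∧ j ≤ n ∧ f n j ≤ 0} : ℕ) : ℝ) / n) atTop
      (𝓝 (lowerRoot c P Q)) := by
  set r := fun n => lowerRoot c (p n) (q n)
  set D := fun n => p n ^ 2 - 4 * c * q n
  have hr : Tendsto (fun n => r n / n) atTop (𝓝 (lowerRoot c P Q)) :=
    (hp.lowerRoot c hq).congr' <| (eventually_gt_atTop 0).mono fun n hn =>
      lowerRoot_div c (p n) (q n) (Nat.cast_pos.mpr hn)
  have hD_div : Tendsto (fun n => D n / n ^ 2) atTop (𝓝 (P ^ 2 - 4 * c * Q)) :=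
    ((hp.pow 2).sub (hq.const_mul (4 * c))).congr' <| (eventually_gt_atTop 0).mono fun n hn => by
      have : (n : ℝ) ≠ 0 := by positivity
      simp only [D]; field_simp
  have hD_top : Tendsto D atTop atTop :=
    (hD_div.pos_mul_atTop (by linarith) ((tendsto_pow_atTop two_ne_zero).comp
      tendsto_natCast_atTop_atTop)).congr' <| (eventually_gt_atTop 0).mono fun n hn =>
        div_mul_cancel₀ _ (by positivity)
  have hsInf : ∀ᶠ n in atTop, sInf {j : ℕ | 2 ≤ j ∧ j ≤ n ∧ f n j ≤ 0} = ⌈r n⌉₊ := by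
    filter_upwards [(hr.atTop_of_div_natCast hρ₀).eventually_gt_atTop 1,
      hr.eventually_lt_const hρ₁, hD_top.eventually_ge_atTop (c ^ 2), eventually_gt_atTop 0]
      with n hr₁ hrn hDn hn
    have hn' : (0 : ℝ) < n := Nat.cast_pos.mpr hn
    have hgap : c ≤ √(D n) := le_sqrt_of_sq_le hDn
    refine sInf_setOf_nonpos_eq_ceil (s := r n + √(D n) / c) (fun x => ?_) hr₁ ?_ ?_
    · rw [hf]; exact quadratic_nonpos_iff hc (by nlinarith) x
    · rw [add_le_add_iff_left, le_div_iff₀ hc]; linarith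
    · rw [div_lt_one hn'] at hrn; exact hrn.le
  refine (hr.natCeil_div_natCast ?_).congr' (hsInf.mono fun n h => by simp only [h])
  exact ((hr.atTop_of_div_natCast hρ₀).eventually_ge_atTop 0)

lemma lowerRoot_three_four {σ : ℝ} (hσ : 3 / 2 ≤ σ) :
    lowerRoot 3 4 (2 * σ⁻¹) = 2 / (2 * σ + √(4 * σ ^ 2 - 6 * σ)) := by
  have hσ₀ : 0 < σ := by linarith
  have hw : 0 ≤ 4 - 6 * σ⁻¹ := by
    rw [sub_nonneg, ← div_eq_mul_inv, div_le_iff₀ hσ₀]; linarith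
  set w := √(4 - 6 * σ⁻¹) with hw_def
  have hw2 : w ^ 2 = 4 - 6 * σ⁻¹ := sq_sqrt hw
  have h₁ : √((4 : ℝ) ^ 2 - 4 * 3 * (2 * σ⁻¹)) = 2 * w := by
    rw [show (4 : ℝ) ^ 2 - 4 * 3 * (2 * σ⁻¹) = 2 ^ 2 * (4 - 6 * σ⁻¹) by ring,
      sqrt_mul (by norm_num), sqrt_sq (by norm_num)]
  have h₂ : √(4 * σ ^ 2 - 6 * σ) = σ * w := by
    rw [show 4 * σ ^ 2 - 6 * σ = σ ^ 2 * (4 - 6 * σ⁻¹) by field_simp,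
      sqrt_mul (sq_nonneg σ), sqrt_sq hσ₀.le]
  have hden : 0 < 2 * σ + σ * w := by positivity
  rw [lowerRoot, h₁, h₂, div_eq_div_iff (by norm_num) hden.ne']
  field_simp
  linear_combination (-2 * σ) * hw2 + 12 * mul_inv_cancel₀ hσ₀.ne'

def bThreshSet (n : ℕ) : Set ℕ :=
  {j : ℕ | 2 ≤ j ∧ j ≤ n ∧ ∑ i ∈ Finset.Icc (j + 1) n, (1 : ℝ) / ((i : ℝ) - 2) ≤ 1 / 2}

lemma bThresh_eq_sInf (n : ℕ) : bThresh n = sInf (bThreshSet n) := rfl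

lemma bThresh_mem {n : ℕ} (hn : 2 ≤ n) :
    2 ≤ bThresh n ∧ bThresh n ≤ n ∧ ∑ i ∈ Icc (bThresh n + 1) n, (1 : ℝ) / ((i : ℝ) - 2) ≤ 1 / 2 :=
  Nat.sInf_mem (s := bThreshSet n) ⟨n, hn, le_rfl, by simp⟩

lemma half_lt_sum_Icc_bThresh {n : ℕ} (hn : 2 ≤ n) (hb : 3 ≤ bThresh n) :
    1 / 2 < ∑ i ∈ Icc (bThresh n) n, (1 : ℝ) / ((i : ℝ) - 2) := by
  obtain ⟨-, hbn, -⟩ := bThresh_mem hn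
  by_contra! h
  refine Nat.notMem_of_lt_sInf (s := bThreshSet n) (m := bThresh n - 1)
    (by rw [← bThresh_eq_sInf]; omega)
    ⟨by omega, by omega, ?_⟩
  rwa [Nat.sub_add_cancel (by omega)]

lemma sub_one_div_sqrt_exp_le_bThresh {n : ℕ} (hn : 2 ≤ n) :
    ((n : ℝ) - 1) / √(exp 1) ≤ bThresh n - 1 := by
  obtain ⟨hb2, hbn, hsum⟩ := bThresh_mem hn
  have hn' : (2 : ℝ) ≤ n := by exact_mod_cast hn
  have hb' : (2 : ℝ) ≤ bThresh n := by exact_mod_cast hb2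
  have hlog := log_sub_log_le_sum_Ico_inv_sub 2 (a := bThresh n + 1) (n := n + 1)
    (by push_cast; linarith) (by omega)
  rw [Ico_add_one_right_eq_Icc] at hlog
  replace hlog := hlog.trans hsum
  push_cast at hlog
  rw [← log_div (by linarith) (by linarith), log_le_iff_le_exp (by apply div_pos <;> linarith),
    exp_half, div_le_iff₀ (by linarith)] at hlog
  rw [div_le_iff₀ (sqrt_pos.mpr (exp_pos 1))]
  linarith

lemma bThresh_sub_three_lt {n : ℕ} (hn : 2 ≤ n) (hb : 4 ≤ bThresh n) :
    (bThresh n : ℝ) - 3 < ((n : ℝ) - 2) / √(exp 1) := by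
  obtain ⟨-, hbn, -⟩ := bThresh_mem hn
  have hn' : (4 : ℝ) ≤ n := by exact_mod_cast hb.trans hbn
  have hb' : (4 : ℝ) ≤ bThresh n := by exact_mod_cast hb
  have hlog := sum_Ico_inv_sub_le_log_sub_log 2 (a := bThresh n) (n := n + 1)
    (by linarith) (by omega)
  rw [Ico_add_one_right_eq_Icc] at hlog
  replace hlog := (half_lt_sum_Icc_bThresh hn (by omega)).trans_le hlog
  push_cast at hlog
  rw [← log_div (by linarith) (by linarith), lt_log_iff_exp_lt (by apply div_pos <;> linarith),
    exp_half, lt_div_iff₀ (by linarith)] at hlog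
  rw [lt_div_iff₀ (sqrt_pos.mpr (exp_pos 1))]
  linarith

lemma three_halves_lt_sqrt_exp_one : 3 / 2 < √(exp 1) := by
  rw [← exp_half]; linarith [add_one_lt_exp (by norm_num : (1 : ℝ) / 2 ≠ 0)]

lemma sqrt_exp_one_lt_two : √(exp 1) < 2 :=
  (sqrt_lt' (by norm_num)).mpr (by linarith [exp_one_lt_d9])

lemma abs_bThresh_sub_le : ∀ᶠ n : ℕ in atTop, |(bThresh n : ℝ) - (√(exp 1))⁻¹ * n| ≤ 3 := by
  filter_upwards [eventually_ge_atTop 7] with n hn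
  have hσ₁ := three_halves_lt_sqrt_exp_one
  have hσ₂ := sqrt_exp_one_lt_two
  have hn' : (7 : ℝ) ≤ n := by exact_mod_cast hn
  have hlower := sub_one_div_sqrt_exp_le_bThresh (n := n) (by omega)
  rw [div_le_iff₀ (by linarith)] at hlower
  have hb : 4 ≤ bThresh n := by
    have : (3 : ℝ) < bThresh n := by nlinarith
    exact_mod_cast this
  have hupper := bThresh_sub_three_lt (by omega) hb
  rw [lt_div_iff₀ (by linarith)] at hupper
  have hσ : 0 < √(exp 1) := by linarith
  rw [abs_le, ← div_eq_inv_mul, show (bThresh n : ℝ) - n / √(exp 1) =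
    ((bThresh n : ℝ) * √(exp 1) - n) / √(exp 1) by field_simp, le_div_iff₀ hσ, div_le_iff₀ hσ]
  constructor <;> nlinarith

lemma tendsto_bThresh_div :
    Tendsto (fun n : ℕ => (bThresh n : ℝ) / n) atTop (𝓝 (√(exp 1))⁻¹) :=
  (tendsto_mul_natCast_div_atTop _).div_natCast_of_abs_sub_le abs_bThresh_sub_le

lemma tendsto_sum_Icc_bThresh :
    Tendsto (fun n : ℕ => ∑ i ∈ Icc (bThresh n) n, (1 : ℝ) / ((i : ℝ) - 2)) atTop (𝓝 (1 / 2)) := by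
  have hb := tendsto_bThresh_div.atTop_of_div_natCast
    (inv_pos.mpr (sqrt_pos.mpr (exp_pos 1)))
  have hinv : Tendsto (fun n : ℕ => ((bThresh n : ℝ) - 2)⁻¹) atTop (𝓝 0) :=
    tendsto_inv_atTop_zero.comp (tendsto_atTop_add_const_right _ (-2) hb)
  have hupper : Tendsto (fun n : ℕ => 1 / 2 + ((bThresh n : ℝ) - 2)⁻¹) atTop (𝓝 (1 / 2)) := by
    simpa only [add_zero] using hinv.const_add (1 / 2)
  refine tendsto_of_tendsto_of_tendsto_of_le_of_le' tendsto_const_nhds hupper ?_ ?_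
  all_goals filter_upwards [eventually_ge_atTop 2, hb.eventually_ge_atTop 3] with n hn hb3
  · exact (half_lt_sum_Icc_bThresh hn (by exact_mod_cast hb3)).le
  · obtain ⟨-, hbn, hsum⟩ := bThresh_mem hn
    rw [Icc_eq_cons_Ioc hbn, sum_cons, ← Icc_add_one_left_eq_Ioc, one_div ((bThresh n : ℝ) - 2)]
    linarith

noncomputable def fPolyConst (n : ℕ) : ℝ :=
  ((n : ℝ) - 2) * (bThresh n : ℝ) + 2 * ((n : ℝ) + 1) + uVal n

lemma fPoly_eq (n : ℕ) (x : ℝ) : fPoly n x = 3 * x ^ 2 - (1 + 4 * (n : ℝ)) * x + fPolyConst n := by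
  unfold fPoly fPolyConst; ring

lemma tendsto_fPolyConst_div :
    Tendsto (fun n : ℕ => fPolyConst n / n ^ 2) atTop (𝓝 (2 * (√(exp 1))⁻¹)) := by
  have hb := tendsto_bThresh_div
  have hn₂ : Tendsto (fun n : ℕ => ((n : ℝ) - 2) / n) atTop (𝓝 1) :=
    (tendsto_mul_natCast_div_atTop 1).div_natCast_of_abs_sub_le (C := 2) (.of_forall fun n => by simp)
  have hn₁ : Tendsto (fun n : ℕ => 2 * ((n : ℝ) + 1) / n) atTop (𝓝 2) :=
    (tendsto_mul_natCast_div_atTop 2).div_natCast_of_abs_sub_le (C := 2) (.of_forall fun n => by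
      simp [mul_add])
  have hn₄ : Tendsto (fun n : ℕ => (2 * (n : ℝ) - 4) / n) atTop (𝓝 2) :=
    (tendsto_mul_natCast_div_atTop 2).div_natCast_of_abs_sub_le (C := 4) (.of_forall fun n => by simp)
  have hb₂ : Tendsto (fun n : ℕ => ((bThresh n : ℝ) - 2) / n) atTop (𝓝 (√(exp 1))⁻¹) :=
    hb.div_natCast_of_abs_sub_le (C := 2) (.of_forall fun n => by simp)
  have hlim := ((hn₂.mul hb).add (hn₁.mul tendsto_one_div_atTop_nhds_zero_nat)).add
    ((hb₂.mul hn₄).mul tendsto_sum_Icc_bThresh)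
  rw [show 1 * (√(exp 1))⁻¹ + 2 * 0 + (√(exp 1))⁻¹ * 2 * (1 / 2) = 2 * (√(exp 1))⁻¹ by ring] at hlim
  refine hlim.congr' <| (eventually_ne_atTop 0).mono fun n hn => ?_
  have : (n : ℝ) ≠ 0 := Nat.cast_ne_zero.mpr hn
  simp only [fPolyConst, uVal]
  field_simp

lemma tendsto_aThresh_div :
    Tendsto (fun n : ℕ => (aThresh n : ℝ) / n) atTop (𝓝 (lowerRoot 3 4 (2 * (√(exp 1))⁻¹))) := by
  have hσ := three_halves_lt_sqrt_exp_one
  have hσ₀ : 0 < (√(exp 1))⁻¹ := by positivity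
  have hβ : (√(exp 1))⁻¹ < 2 / 3 := by
    rw [inv_lt_comm₀ (by linarith) (by norm_num)]; linarith
  refine tendsto_sInf_quadratic_nonpos_div (by norm_num) fPoly_eq
    ((tendsto_mul_natCast_div_atTop 4).div_natCast_of_abs_sub_le (C := 1)
      (.of_forall fun n => by simp)) tendsto_fPolyConst_div (by linarith) ?_ ?_
  · rw [lowerRoot, lt_div_iff₀ (by norm_num), zero_mul, sub_pos,
      sqrt_lt' (by norm_num)]
    linarith
  · rw [lowerRoot, div_lt_one (by norm_num)]
    linarith [sqrt_nonneg ((4 : ℝ) ^ 2 - 4 * 3 * (2 * (√(exp 1))⁻¹))]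

theorem thresholds_asymptotics :
    Filter.Tendsto (fun n : ℕ => (aThresh n : ℝ) / (n : ℝ)) Filter.atTop
      (nhds (2 / (2 * Real.sqrt (Real.exp 1) +
        Real.sqrt (4 * Real.exp 1 - 6 * Real.sqrt (Real.exp 1))))) ∧
    Filter.Tendsto (fun n : ℕ => (bThresh n : ℝ) / (n : ℝ)) Filter.atTop
      (nhds (1 / Real.sqrt (Real.exp 1))) := by
  have hd₁ := lowerRoot_three_four three_halves_lt_sqrt_exp_one.le
  rw [sq_sqrt (exp_pos 1).le] at hd₁
  exact ⟨hd₁ ▸ tendsto_aThresh_div, (one_div (√(exp 1))).symm ▸ tendsto_bThresh_div⟩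
end
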